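/- arXiv:2506.23430 — 6 statements merged into one kernel-verified Lean document; each statement's English description precedes it below -/
import Mathlib

section
/- Let n, m ≥ 1 and j ≤ k be real parameters with s = 2^j and t = 2^k (so s ≤ t). Then there exists a constant C depending only on n and m such that for all x ∈ ℝ^n and y ∈ ℝ^m with |y| ≥ t, ∫_{|z| ≤ |y|/2} s (s + |x| + |y − z|)^{-(n+m+1)} · t (t + |z|)^{-(m+1)} dz ≤ C · s^{1/2} (s + |x|)^{-(n+1/2)} · t^{1/2} (t + |y|)^{-(m+1/2)}. -/
open MeasureTheory Real Set

noncomputable section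

private lemma flag_aux_scaling (m : ℕ) {t : ℝ} (ht : 0 < t) :
    ∫ z : EuclideanSpace ℝ (Fin m), t * (t + ‖z‖) ^ (-((m : ℝ) + 1)) =
    ∫ z : EuclideanSpace ℝ (Fin m), (1 + ‖z‖) ^ (-((m : ℝ) + 1)) := by
  have h1 : ∀ z : EuclideanSpace ℝ (Fin m),
      t * (t + ‖z‖) ^ (-((m : ℝ) + 1)) =
        t ^ (-(m : ℝ)) * (1 + ‖t⁻¹ • z‖) ^ (-((m : ℝ) + 1)) := by
    intro z
    have hz : (0 : ℝ) ≤ ‖z‖ := norm_nonneg z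
    have hnorm : ‖t⁻¹ • z‖ = t⁻¹ * ‖z‖ := by
      rw [norm_smul, Real.norm_eq_abs, abs_of_pos (inv_pos.2 ht)]
    have hb : t + ‖z‖ = t * (1 + ‖t⁻¹ • z‖) := by
      rw [hnorm]; field_simp
    rw [hb, Real.mul_rpow ht.le (by positivity)]
    rw [show t * (t ^ (-((m : ℝ) + 1)) * (1 + ‖t⁻¹ • z‖) ^ (-((m : ℝ) + 1)))
        = (t ^ (1 : ℝ) * t ^ (-((m : ℝ) + 1))) * (1 + ‖t⁻¹ • z‖) ^ (-((m : ℝ) + 1)) by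
      rw [Real.rpow_one]; ring]
    rw [← Real.rpow_add ht]
    norm_num
  simp_rw [h1]
  rw [integral_const_mul]
  rw [MeasureTheory.Measure.integral_comp_inv_smul_of_nonneg volume
      (fun z : EuclideanSpace ℝ (Fin m) => (1 + ‖z‖) ^ (-((m : ℝ) + 1))) ht.le]
  rw [finrank_euclideanSpace_fin, smul_eq_mul, ← mul_assoc]
  rw [show t ^ (-(m : ℝ)) * t ^ m = 1 by
    rw [← Real.rpow_natCast t m, ← Real.rpow_add ht]; simp]
  ring

set_option maxHeartbeats 1000000 in
/-- Flag almost-orthogonality estimate, Case 1 (term `I` region): for `n, m ≥ 1` and scales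
`s = 2^j ≤ t = 2^k`, there is `C` depending only on `n, m` such that for all `x ∈ ℝ^n`,
`y ∈ ℝ^m` with `|y| ≥ t`,
`∫_{|z| ≤ |y|/2} s (s+|x|+|y−z|)^{-(n+m+1)} · t (t+|z|)^{-(m+1)} dz
  ≤ C s^{1/2} (s+|x|)^{-(n+1/2)} · t^{1/2} (t+|y|)^{-(m+1/2)}`. -/
theorem flag_orthogonality_case1 (n m : ℕ) (hn : 1 ≤ n) (hm : 1 ≤ m) :
    ∃ C > 0, ∀ j k : ℝ, j ≤ k →
      ∀ (x : EuclideanSpace ℝ (Fin n)) (y : EuclideanSpace ℝ (Fin m)),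
        (2 : ℝ) ^ k ≤ ‖y‖ →
        (∫ z in {z : EuclideanSpace ℝ (Fin m) | ‖z‖ ≤ ‖y‖ / 2},
            (2 : ℝ) ^ j * ((2 : ℝ) ^ j + ‖x‖ + ‖y - z‖) ^ (-((n : ℝ) + m + 1)) *
              ((2 : ℝ) ^ k * ((2 : ℝ) ^ k + ‖z‖) ^ (-((m : ℝ) + 1))))
          ≤ C * ((2 : ℝ) ^ j) ^ ((1 : ℝ) / 2) * ((2 : ℝ) ^ j + ‖x‖) ^ (-((n : ℝ) + 1 / 2)) *
              (((2 : ℝ) ^ k) ^ ((1 : ℝ) / 2) * ((2 : ℝ) ^ k + ‖y‖) ^ (-((m : ℝ) + 1 / 2))) := by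
  have hfin : ((Module.finrank ℝ (EuclideanSpace ℝ (Fin m)) : ℝ)) < (m : ℝ) + 1 := by
    rw [finrank_euclideanSpace_fin]; linarith
  have hint1 : Integrable (fun z : EuclideanSpace ℝ (Fin m) => (1 + ‖z‖) ^ (-((m : ℝ) + 1))) :=
    integrable_one_add_norm hfin
  set Im := ∫ z : EuclideanSpace ℝ (Fin m), (1 + ‖z‖) ^ (-((m : ℝ) + 1)) with hIm
  have hImpos : 0 < Im := by
    rw [hIm, MeasureTheory.integral_pos_iff_support_of_nonneg
        (fun z => by positivity) hint1]
    have : (Function.support fun z : EuclideanSpace ℝ (Fin m) =>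
        (1 + ‖z‖) ^ (-((m : ℝ) + 1))) = Set.univ := by
      ext z; simp only [Function.mem_support, mem_univ, iff_true]
      positivity
    rw [this]
    exact MeasureTheory.Measure.measure_univ_pos.mpr (NeZero.ne _)
  set N : ℝ := (n : ℝ) + m + 1 with hN
  refine ⟨Im * 2 ^ N * 2 ^ ((m : ℝ) + 1 / 2), by positivity, ?_⟩
  intro j k hjk x y hy
  set s : ℝ := (2 : ℝ) ^ j with hs'
  set t : ℝ := (2 : ℝ) ^ k with ht'
  have hs : 0 < s := Real.rpow_pos_of_pos two_pos j
  have ht : 0 < t := Real.rpow_pos_of_pos two_pos k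
  have hst : s ≤ t := Real.rpow_le_rpow_of_exponent_le one_le_two hjk
  set a : ℝ := s + ‖x‖ + ‖y‖ with ha'
  have ha : 0 < a := by positivity
  set S := {z : EuclideanSpace ℝ (Fin m) | ‖z‖ ≤ ‖y‖ / 2} with hS'
  have hSmeas : MeasurableSet S :=
    (isClosed_le continuous_norm continuous_const).measurableSet
  set K : ℝ := s * (a / 2) ^ (-N) with hK'
  have hKpos : 0 < K := by positivity
  set g : EuclideanSpace ℝ (Fin m) → ℝ := fun z => t * (t + ‖z‖) ^ (-((m : ℝ) + 1)) with hg'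
  set f : EuclideanSpace ℝ (Fin m) → ℝ := fun z =>
    s * (s + ‖x‖ + ‖y - z‖) ^ (-N) * (t * (t + ‖z‖) ^ (-((m : ℝ) + 1))) with hf'
  have hgint : Integrable g := by
    have h1 : ∀ z : EuclideanSpace ℝ (Fin m),
        g z = t ^ (-(m : ℝ)) * (1 + ‖t⁻¹ • z‖) ^ (-((m : ℝ) + 1)) := by
      intro z
      have hnorm : ‖t⁻¹ • z‖ = t⁻¹ * ‖z‖ := by
        rw [norm_smul, Real.norm_eq_abs, abs_of_pos (inv_pos.2 ht)]
      have hb : t + ‖z‖ = t * (1 + ‖t⁻¹ • z‖) := by rw [hnorm]; field_simp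
      show t * (t + ‖z‖) ^ (-((m : ℝ) + 1)) = _
      rw [hb, Real.mul_rpow ht.le (by positivity)]
      rw [show t * (t ^ (-((m : ℝ) + 1)) * (1 + ‖t⁻¹ • z‖) ^ (-((m : ℝ) + 1)))
          = (t ^ (1 : ℝ) * t ^ (-((m : ℝ) + 1))) * (1 + ‖t⁻¹ • z‖) ^ (-((m : ℝ) + 1)) by
        rw [Real.rpow_one]; ring]
      rw [← Real.rpow_add ht]
      norm_num
    have : Integrable (fun z : EuclideanSpace ℝ (Fin m) =>
        (1 + ‖t⁻¹ • z‖) ^ (-((m : ℝ) + 1))) :=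
      hint1.comp_smul (inv_ne_zero ht.ne')
    exact (funext h1 : g = _) ▸ this.const_mul _
  have hgnonneg : ∀ z, 0 ≤ g z := fun z => by
    have := norm_nonneg z; rw [hg']; positivity
  have hfnonneg : ∀ z, 0 ≤ f z := fun z => by
    have h1 := norm_nonneg (y - z); have h2 := norm_nonneg z; rw [hf']; positivity
  -- pointwise bound on S
  have hbound : ∀ z ∈ S, f z ≤ K * g z := by
    intro z hz
    have hz' : ‖z‖ ≤ ‖y‖ / 2 := hz
    have hyz : ‖y‖ / 2 ≤ ‖y - z‖ := by
      have := norm_sub_norm_le y z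
      linarith [norm_sub_norm_le y z]
    have hbase : a / 2 ≤ s + ‖x‖ + ‖y - z‖ := by
      rw [ha']; linarith [norm_nonneg x]
    have h1 : (s + ‖x‖ + ‖y - z‖) ^ (-N) ≤ (a / 2) ^ (-N) :=
      Real.rpow_le_rpow_of_nonpos (by positivity) hbase
        (neg_nonpos.mpr (by rw [hN]; positivity))
    rw [hf', hK']
    have hgz : 0 ≤ g z := hgnonneg z
    calc s * (s + ‖x‖ + ‖y - z‖) ^ (-N) * g z
        ≤ s * (a / 2) ^ (-N) * g z := by
          apply mul_le_mul_of_nonneg_right _ hgz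
          exact mul_le_mul_of_nonneg_left h1 hs.le
      _ = s * (a / 2) ^ (-N) * g z := rfl
  have hfmeas : AEStronglyMeasurable f (volume.restrict S) := by
    apply Continuous.aestronglyMeasurable
    have c1 : Continuous fun z : EuclideanSpace ℝ (Fin m) => s + ‖x‖ + ‖y - z‖ := by
      fun_prop
    have c2 : Continuous fun z : EuclideanSpace ℝ (Fin m) => t + ‖z‖ := by fun_prop
    apply Continuous.mul
    · exact continuous_const.mul (c1.rpow_const fun z => Or.inl (by
        have := norm_nonneg (y - z); positivity))
    · exact continuous_const.mul (c2.rpow_const fun z => Or.inl (by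
        have := norm_nonneg z; positivity))
  have hfint : IntegrableOn f S := by
    refine Integrable.mono' ((hgint.const_mul K).integrableOn) hfmeas ?_
    rw [ae_restrict_iff' hSmeas]
    filter_upwards with z hz
    rw [Real.norm_of_nonneg (hfnonneg z)]
    exact hbound z hz
  have hgI : ∫ z : EuclideanSpace ℝ (Fin m), g z = Im := flag_aux_scaling m ht
  have key : (∫ z in S, f z) ≤ K * Im := by
    calc (∫ z in S, f z) ≤ ∫ z in S, K * g z :=
          setIntegral_mono_on hfint ((hgint.const_mul K).integrableOn) hSmeas hbound
      _ ≤ ∫ z, K * g z := setIntegral_le_integral (hgint.const_mul K)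
          (Filter.Eventually.of_forall fun z => mul_nonneg hKpos.le (hgnonneg z))
      _ = K * Im := by rw [integral_const_mul, hgI]
  refine le_trans key ?_
  -- now pure algebra
  clear_value Im N s t a K
  have hNnonneg : (0:ℝ) ≤ N := by rw [hN]; positivity
  have e1 : (a / 2) ^ (-N) = 2 ^ N * a ^ (-N) := by
    rw [Real.div_rpow ha.le (by norm_num : (0:ℝ) ≤ 2), div_eq_mul_inv,
      Real.rpow_neg (by norm_num : (0:ℝ) ≤ 2), inv_inv]
    ring
  have e2 : a ^ (-N) = a ^ (-((n:ℝ) + 1/2)) * a ^ (-((m:ℝ) + 1/2)) := by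
    rw [← Real.rpow_add ha]; congr 1; rw [hN]; ring
  have h1 : a ^ (-((n:ℝ) + 1/2)) ≤ (s + ‖x‖) ^ (-((n:ℝ) + 1/2)) := by
    apply Real.rpow_le_rpow_of_nonpos (by positivity) (by rw [ha']; linarith [norm_nonneg y])
    have : (0:ℝ) ≤ (n:ℝ) + 1/2 := by positivity
    linarith
  have h2 : a ^ (-((m:ℝ) + 1/2)) ≤ 2 ^ ((m:ℝ) + 1/2) * (t + ‖y‖) ^ (-((m:ℝ) + 1/2)) := by
    have hta : (t + ‖y‖) / 2 ≤ a := by rw [ha']; linarith [norm_nonneg x, hs.le]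
    have hmp : -(((m:ℝ) + 1/2)) ≤ 0 := by
      have : (0:ℝ) ≤ (m:ℝ) + 1/2 := by positivity
      linarith
    have step : a ^ (-((m:ℝ) + 1/2)) ≤ ((t + ‖y‖) / 2) ^ (-((m:ℝ) + 1/2)) :=
      Real.rpow_le_rpow_of_nonpos (by positivity) hta hmp
    have e3 : ((t + ‖y‖) / 2) ^ (-((m:ℝ) + 1/2))
        = 2 ^ ((m:ℝ) + 1/2) * (t + ‖y‖) ^ (-((m:ℝ) + 1/2)) := by
      rw [Real.div_rpow (by positivity) (by norm_num : (0:ℝ) ≤ 2), div_eq_mul_inv,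
        Real.rpow_neg (by norm_num : (0:ℝ) ≤ 2), inv_inv]
      ring
    rw [e3] at step; exact step
  have h3 : s ≤ s ^ ((1:ℝ)/2) * t ^ ((1:ℝ)/2) := by
    have hss : s = s ^ ((1:ℝ)/2) * s ^ ((1:ℝ)/2) := by
      rw [← Real.rpow_add hs]; norm_num
    calc s = s ^ ((1:ℝ)/2) * s ^ ((1:ℝ)/2) := hss
      _ ≤ s ^ ((1:ℝ)/2) * t ^ ((1:ℝ)/2) := by
        apply mul_le_mul_of_nonneg_left (Real.rpow_le_rpow hs.le hst (by norm_num))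
        positivity
  have hrw : K * Im = Im * 2 ^ N *
      (s * (a ^ (-((n:ℝ) + 1/2)) * a ^ (-((m:ℝ) + 1/2)))) := by
    rw [hK', e1, e2]; ring
  rw [hrw]
  have main : s * (a ^ (-((n:ℝ) + 1/2)) * a ^ (-((m:ℝ) + 1/2)))
      ≤ (s ^ ((1:ℝ)/2) * t ^ ((1:ℝ)/2)) *
        ((s + ‖x‖) ^ (-((n:ℝ) + 1/2)) * (2 ^ ((m:ℝ) + 1/2) * (t + ‖y‖) ^ (-((m:ℝ) + 1/2)))) := by
    apply mul_le_mul h3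
    · exact mul_le_mul h1 h2 (by positivity) (by positivity)
    · positivity
    · positivity
  calc Im * 2 ^ N * (s * (a ^ (-((n:ℝ) + 1/2)) * a ^ (-((m:ℝ) + 1/2))))
      ≤ Im * 2 ^ N * ((s ^ ((1:ℝ)/2) * t ^ ((1:ℝ)/2)) *
        ((s + ‖x‖) ^ (-((n:ℝ) + 1/2)) * (2 ^ ((m:ℝ) + 1/2) * (t + ‖y‖) ^ (-((m:ℝ) + 1/2))))) :=
        mul_le_mul_of_nonneg_left main (by positivity)
    _ = Im * 2 ^ N * 2 ^ ((m:ℝ) + 1/2) * s ^ ((1:ℝ)/2) * (s + ‖x‖) ^ (-((n:ℝ) + 1/2)) *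
        (t ^ ((1:ℝ)/2) * (t + ‖y‖) ^ (-((m:ℝ) + 1/2))) := by ring

end
end

section
/- Let n, m ≥ 1 and let s = 2^j ≤ t = 2^k. Then there is a constant C depending only on n and m such that for all x ∈ ℝ^n and y ∈ ℝ^m with |y| ≤ t, ∫_{ℝ^m} s (s + |x| + |y − z|)^{-(n+m+1)} · t (t + |z|)^{-(m+1)} dz ≤ C · s^{1/2} (s + |x|)^{-(n+1/2)} · t^{1/2} (t + |y|)^{-(m+1/2)}. -/
open MeasureTheory Real Set

noncomputable section

section Aux

variable (m : ℕ)

local notation "E" => EuclideanSpace ℝ (Fin m)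

lemma aux_eq (a p : ℝ) (ha : 0 < a) (w : E) :
    (a + ‖w‖) ^ (-p) = a ^ (-p) * (1 + ‖a⁻¹ • w‖) ^ (-p) := by
  have h1 : ‖a⁻¹ • w‖ = a⁻¹ * ‖w‖ := by
    rw [norm_smul, Real.norm_eq_abs, abs_of_pos (by positivity)]
  have h2 : (1 : ℝ) + a⁻¹ * ‖w‖ = a⁻¹ * (a + ‖w‖) := by
    field_simp
  rw [h1, h2, Real.mul_rpow (by positivity) (by positivity), Real.inv_rpow ha.le,
    ← mul_assoc, mul_inv_cancel₀ (by positivity), one_mul]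

lemma aux_integrable {a p : ℝ} (ha : 0 < a) (hp : (m : ℝ) < p) :
    Integrable (fun w : E => (a + ‖w‖) ^ (-p)) := by
  have h0 : Integrable (fun w : E => (1 + ‖w‖) ^ (-p)) :=
    integrable_one_add_norm (by simpa using hp)
  have h1 : Integrable (fun w : E => (1 + ‖a⁻¹ • w‖) ^ (-p)) :=
    h0.comp_smul (inv_ne_zero ha.ne')
  have := h1.const_mul (a ^ (-p))
  refine this.congr (Filter.Eventually.of_forall fun w => ?_)
  exact (aux_eq m a p ha w).symm

lemma aux_integral (a p : ℝ) (ha : 0 < a) :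
    ∫ w : E, (a + ‖w‖) ^ (-p) = a ^ ((m : ℝ) - p) * ∫ w : E, (1 + ‖w‖) ^ (-p) := by
  have : ∫ w : E, (a + ‖w‖) ^ (-p)
      = ∫ w : E, a ^ (-p) * (1 + ‖a⁻¹ • w‖) ^ (-p) := by
    congr 1; funext w; exact aux_eq m a p ha w
  rw [this, integral_const_mul]
  have hsc := MeasureTheory.Measure.integral_comp_inv_smul_of_nonneg (volume : Measure E)
    (fun w : E => (1 + ‖w‖) ^ (-p)) ha.le
  rw [hsc, finrank_euclideanSpace_fin, smul_eq_mul, ← mul_assoc,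
    ← Real.rpow_natCast a m, ← Real.rpow_add ha]
  ring_nf

lemma final_bound (N M I₀ s t X Y : ℝ) (hs : 0 < s) (ht : 0 < t) (hI : 0 ≤ I₀)
    (hX : 0 ≤ X) (hY : 0 ≤ Y) (hy : Y ≤ t) (hM : 0 ≤ M) :
    s * (t * t ^ (-(M + 1))) * ((s + X) ^ (M - (N + M + 1)) * I₀)
      ≤ (I₀ + 1) * 2 ^ (M + 1/2) * s ^ ((1:ℝ)/2) * (s + X) ^ (-(N + 1/2)) *
          (t ^ ((1:ℝ)/2) * (t + Y) ^ (-(M + 1/2))) := by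
  have hsx : (0:ℝ) < s + X := by positivity
  have e1 : t * t ^ (-(M + 1)) = t ^ (-M) := by
    nth_rewrite 1 [← Real.rpow_one t]
    rw [← Real.rpow_add ht]; ring_nf
  have e2 : M - (N + M + 1) = -(N + 1) := by ring
  have f2 : s * (s + X) ^ (-(N + 1)) ≤ s ^ ((1:ℝ)/2) * (s + X) ^ (-(N + 1/2)) := by
    have h1 : s = s ^ ((1:ℝ)/2) * s ^ ((1:ℝ)/2) := by
      rw [← Real.rpow_add hs]; norm_num
    have h2 : s ^ ((1:ℝ)/2) ≤ (s + X) ^ ((1:ℝ)/2) :=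
      Real.rpow_le_rpow hs.le (by linarith) (by norm_num)
    have h3 : (s + X) ^ ((1:ℝ)/2) * (s + X) ^ (-(N + 1)) = (s + X) ^ (-(N + 1/2)) := by
      rw [← Real.rpow_add hsx]; ring_nf
    calc s * (s + X) ^ (-(N + 1)) = s ^ ((1:ℝ)/2) * s ^ ((1:ℝ)/2) * (s + X) ^ (-(N + 1)) := by
          rw [← h1]
      _ ≤ s ^ ((1:ℝ)/2) * (s + X) ^ ((1:ℝ)/2) * (s + X) ^ (-(N + 1)) := by gcongr
      _ = s ^ ((1:ℝ)/2) * (s + X) ^ (-(N + 1/2)) := by rw [mul_assoc, h3]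
  have f3 : t ^ (-M) ≤ 2 ^ (M + 1/2) * (t ^ ((1:ℝ)/2) * (t + Y) ^ (-(M + 1/2))) := by
    have h4 : (2 * t) ^ (-(M + 1/2)) ≤ (t + Y) ^ (-(M + 1/2)) :=
      Real.rpow_le_rpow_of_nonpos (by positivity) (by linarith)
        (neg_nonpos.mpr (by linarith))
    have h5 : (2 * t : ℝ) ^ (-(M + 1/2)) = 2 ^ (-(M + 1/2)) * t ^ (-(M + 1/2)) :=
      Real.mul_rpow (by norm_num) ht.le
    have h6 : (2:ℝ) ^ (M + 1/2) * (t ^ ((1:ℝ)/2) * ((2:ℝ) ^ (-(M + 1/2)) * t ^ (-(M + 1/2))))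
        = t ^ (-M) := by
      rw [show (2:ℝ) ^ (M + 1/2) * (t ^ ((1:ℝ)/2) * ((2:ℝ) ^ (-(M + 1/2)) * t ^ (-(M + 1/2))))
          = ((2:ℝ) ^ (M + 1/2) * (2:ℝ) ^ (-(M + 1/2))) * (t ^ ((1:ℝ)/2) * t ^ (-(M + 1/2)))
          from by ring,
        ← Real.rpow_add two_pos, ← Real.rpow_add ht,
        show M + 1/2 + -(M + 1/2) = (0:ℝ) from by ring, Real.rpow_zero, one_mul,
        show (1:ℝ)/2 + -(M + 1/2) = -M from by ring]
    calc t ^ (-M) = 2 ^ (M + 1/2) * (t ^ ((1:ℝ)/2) * (2 * t) ^ (-(M + 1/2))) := by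
          rw [h5]; exact h6.symm
      _ ≤ 2 ^ (M + 1/2) * (t ^ ((1:ℝ)/2) * (t + Y) ^ (-(M + 1/2))) := by gcongr
  calc s * (t * t ^ (-(M + 1))) * ((s + X) ^ (M - (N + M + 1)) * I₀)
      = I₀ * (s * (s + X) ^ (-(N + 1))) * t ^ (-M) := by rw [e1, e2]; ring
    _ ≤ (I₀ + 1) * (s ^ ((1:ℝ)/2) * (s + X) ^ (-(N + 1/2))) *
          (2 ^ (M + 1/2) * (t ^ ((1:ℝ)/2) * (t + Y) ^ (-(M + 1/2)))) := by
        exact mul_le_mul (mul_le_mul (by linarith) f2 (by positivity) (by linarith)) f3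
          (by positivity) (by positivity)
    _ = (I₀ + 1) * 2 ^ (M + 1/2) * s ^ ((1:ℝ)/2) * (s + X) ^ (-(N + 1/2)) *
          (t ^ ((1:ℝ)/2) * (t + Y) ^ (-(M + 1/2))) := by ring


end Aux

/-- Flag almost-orthogonality estimate, Case 2: for `n, m ≥ 1` and scales
`s = 2^j ≤ t = 2^k`, there is `C` depending only on `n, m` such that for all `x ∈ ℝ^n`,
`y ∈ ℝ^m` with `|y| ≤ t`,
`∫_{ℝ^m} s (s+|x|+|y−z|)^{-(n+m+1)} · t (t+|z|)^{-(m+1)} dz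
  ≤ C s^{1/2} (s+|x|)^{-(n+1/2)} · t^{1/2} (t+|y|)^{-(m+1/2)}`. -/
theorem flag_orthogonality_case2 (n m : ℕ) (hn : 1 ≤ n) (hm : 1 ≤ m) :
    ∃ C > 0, ∀ j k : ℝ, j ≤ k →
      ∀ (x : EuclideanSpace ℝ (Fin n)) (y : EuclideanSpace ℝ (Fin m)),
        ‖y‖ ≤ (2 : ℝ) ^ k →
        (∫ z : EuclideanSpace ℝ (Fin m),
            (2 : ℝ) ^ j * ((2 : ℝ) ^ j + ‖x‖ + ‖y - z‖) ^ (-((n : ℝ) + m + 1)) *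
              ((2 : ℝ) ^ k * ((2 : ℝ) ^ k + ‖z‖) ^ (-((m : ℝ) + 1))))
          ≤ C * ((2 : ℝ) ^ j) ^ ((1 : ℝ) / 2) * ((2 : ℝ) ^ j + ‖x‖) ^ (-((n : ℝ) + 1 / 2)) *
              (((2 : ℝ) ^ k) ^ ((1 : ℝ) / 2) * ((2 : ℝ) ^ k + ‖y‖) ^ (-((m : ℝ) + 1 / 2))) := by
  set p : ℝ := (n : ℝ) + m + 1 with hp
  set I₀ : ℝ := ∫ w : EuclideanSpace ℝ (Fin m), (1 + ‖w‖) ^ (-p) with hI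
  have hI₀ : 0 ≤ I₀ := integral_nonneg fun w => by positivity
  refine ⟨(I₀ + 1) * 2 ^ ((m : ℝ) + 1/2), by positivity, ?_⟩
  intro j k hjk x y hy
  set s : ℝ := (2 : ℝ) ^ j with hs'
  set t : ℝ := (2 : ℝ) ^ k with ht'
  have hs : 0 < s := Real.rpow_pos_of_pos two_pos j
  have ht : 0 < t := Real.rpow_pos_of_pos two_pos k
  set a : ℝ := s + ‖x‖ with ha
  have ha0 : 0 < a := by positivity
  have hpm : (m : ℝ) < p := by
    have h0 : (1:ℝ) ≤ (n:ℝ) := by exact_mod_cast hn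
    simp only [hp]; linarith
  -- integrability of the dominating function
  have hint : Integrable (fun z : EuclideanSpace ℝ (Fin m) => (a + ‖y - z‖) ^ (-p)) :=
    (integrable_comp_sub_left (fun w : EuclideanSpace ℝ (Fin m) => (a + ‖w‖) ^ (-p)) y).mpr
      (aux_integrable m ha0 hpm)
  have hg : Integrable (fun z : EuclideanSpace ℝ (Fin m) =>
      s * (t * t ^ (-((m : ℝ) + 1))) * (a + ‖y - z‖) ^ (-p)) :=
    hint.const_mul _
  -- pointwise bound
  have hmono : (∫ z : EuclideanSpace ℝ (Fin m),
        s * (a + ‖y - z‖) ^ (-p) * (t * (t + ‖z‖) ^ (-((m : ℝ) + 1))))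
      ≤ ∫ z : EuclideanSpace ℝ (Fin m),
        s * (t * t ^ (-((m : ℝ) + 1))) * (a + ‖y - z‖) ^ (-p) := by
    refine integral_mono_of_nonneg (Filter.Eventually.of_forall fun z => by positivity) hg
      (Filter.Eventually.of_forall fun z => ?_)
    have hT : (t + ‖z‖) ^ (-((m : ℝ) + 1)) ≤ t ^ (-((m : ℝ) + 1)) :=
      Real.rpow_le_rpow_of_nonpos ht (le_add_of_nonneg_right (norm_nonneg z))
        (neg_nonpos.mpr (by positivity))
    have hA : (0:ℝ) ≤ (a + ‖y - z‖) ^ (-p) := by positivity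
    show s * (a + ‖y - z‖) ^ (-p) * (t * (t + ‖z‖) ^ (-((m:ℝ) + 1)))
      ≤ s * (t * t ^ (-((m:ℝ) + 1))) * (a + ‖y - z‖) ^ (-p)
    have hkey := mul_le_mul_of_nonneg_left hT
      (by positivity : (0:ℝ) ≤ s * t * (a + ‖y - z‖) ^ (-p))
    nlinarith [hkey]
  -- compute the dominating integral
  have hcalc : (∫ z : EuclideanSpace ℝ (Fin m),
        s * (t * t ^ (-((m : ℝ) + 1))) * (a + ‖y - z‖) ^ (-p))
      = s * (t * t ^ (-((m : ℝ) + 1))) * (a ^ ((m : ℝ) - p) * I₀) := by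
    rw [integral_const_mul, MeasureTheory.integral_sub_left_eq_self
      (fun w : EuclideanSpace ℝ (Fin m) => (a + ‖w‖) ^ (-p)) volume y,
      aux_integral m a p ha0]
  calc (∫ z : EuclideanSpace ℝ (Fin m),
        s * (a + ‖y - z‖) ^ (-p) * (t * (t + ‖z‖) ^ (-((m : ℝ) + 1))))
      ≤ s * (t * t ^ (-((m : ℝ) + 1))) * (a ^ ((m : ℝ) - p) * I₀) := hcalc ▸ hmono
    _ ≤ (I₀ + 1) * 2 ^ ((m : ℝ) + 1/2) * s ^ ((1:ℝ)/2) * a ^ (-((n : ℝ) + 1/2)) *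
          (t ^ ((1:ℝ)/2) * (t + ‖y‖) ^ (-((m : ℝ) + 1/2))) := by
        have := final_bound (n : ℝ) (m : ℝ) I₀ s t ‖x‖ ‖y‖ hs ht hI₀ (norm_nonneg x)
          (norm_nonneg y) hy (by positivity)
        simpa [hp, ha] using this
end
end

section
/- Let n, m ≥ 1 and let s = 2^j ≥ t = 2^k. Then there is a constant C depending only on n and m such that for all x ∈ ℝ^n and y ∈ ℝ^m with |y| ≤ s, ∫_{ℝ^m} s (s + |x| + |y − z|)^{-(n+m+1)} · t (t + |z|)^{-(m+1)} dz ≤ C · s^{1/2} (s + |x|)^{-(n+1/2)} · s^{1/2} (s + |y|)^{-(m+1/2)}. -/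
open MeasureTheory Real Set

noncomputable section



lemma key_ptw (m : ℕ) (t : ℝ) (ht : 0 < t) (z : EuclideanSpace ℝ (Fin m)) :
    t * (t + ‖z‖) ^ (-((m : ℝ) + 1)) =
      t ^ (-(m : ℝ)) * (1 + ‖t⁻¹ • z‖) ^ (-((m : ℝ) + 1)) := by
  have hz : (0:ℝ) ≤ ‖z‖ := norm_nonneg z
  have h1 : ‖t⁻¹ • z‖ = t⁻¹ * ‖z‖ := by
    rw [norm_smul, Real.norm_eq_abs, abs_of_pos (inv_pos.2 ht)]
  have h2 : (1:ℝ) + t⁻¹ * ‖z‖ = t⁻¹ * (t + ‖z‖) := by field_simp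
  rw [h1, h2, Real.mul_rpow (by positivity) (by positivity),
    Real.inv_rpow ht.le, ← Real.rpow_neg ht.le, neg_neg, ← mul_assoc,
    ← Real.rpow_add ht]
  norm_num

lemma key_integrable (m : ℕ) (t : ℝ) (ht : 0 < t) :
    Integrable (fun z : EuclideanSpace ℝ (Fin m) =>
      t * (t + ‖z‖) ^ (-((m : ℝ) + 1))) := by
  have hbase : Integrable (fun w : EuclideanSpace ℝ (Fin m) =>
      (1 + ‖w‖) ^ (-((m : ℝ) + 1))) := by
    apply integrable_one_add_norm
    rw [finrank_euclideanSpace_fin]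
    exact lt_add_one _
  have := (hbase.comp_smul (R := t⁻¹) (by positivity)).const_mul (t ^ (-(m : ℝ)))
  refine this.congr (Filter.Eventually.of_forall fun z => ?_)
  exact (key_ptw m t ht z).symm

lemma key_int (m : ℕ) (t : ℝ) (ht : 0 < t) :
    ∫ z : EuclideanSpace ℝ (Fin m), t * (t + ‖z‖) ^ (-((m : ℝ) + 1)) =
      ∫ w : EuclideanSpace ℝ (Fin m), (1 + ‖w‖) ^ (-((m : ℝ) + 1)) := by
  simp_rw [key_ptw m t ht]
  rw [MeasureTheory.integral_const_mul,
    MeasureTheory.Measure.integral_comp_inv_smul volume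
      (fun w : EuclideanSpace ℝ (Fin m) => (1 + ‖w‖) ^ (-((m : ℝ) + 1))) t,
    finrank_euclideanSpace_fin, smul_eq_mul, abs_of_pos (by positivity), ← mul_assoc,
    ← Real.rpow_natCast t m, ← Real.rpow_add ht]
  norm_num

lemma key_pos (m : ℕ) :
    0 < ∫ w : EuclideanSpace ℝ (Fin m), (1 + ‖w‖) ^ (-((m : ℝ) + 1)) := by
  have hbase : Integrable (fun w : EuclideanSpace ℝ (Fin m) =>
      (1 + ‖w‖) ^ (-((m : ℝ) + 1))) := by
    apply integrable_one_add_norm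
    rw [finrank_euclideanSpace_fin]
    exact lt_add_one _
  refine (integral_pos_iff_support_of_nonneg (fun w => by positivity) hbase).2 ?_
  have : Function.support (fun w : EuclideanSpace ℝ (Fin m) =>
      (1 + ‖w‖) ^ (-((m : ℝ) + 1))) = Set.univ := by
    ext w; simp only [Function.mem_support, Set.mem_univ, iff_true]
    positivity
  rw [this]
  exact isOpen_univ.measure_pos volume univ_nonempty

/-- Flag almost-orthogonality estimate, Case 3: for `n, m ≥ 1` and scales
`s = 2^j ≥ t = 2^k`, there is `C` depending only on `n, m` such that for all `x ∈ ℝ^n`,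
`y ∈ ℝ^m` with `|y| ≤ s`,
`∫_{ℝ^m} s (s+|x|+|y−z|)^{-(n+m+1)} · t (t+|z|)^{-(m+1)} dz
  ≤ C s^{1/2} (s+|x|)^{-(n+1/2)} · s^{1/2} (s+|y|)^{-(m+1/2)}`. -/
theorem flag_orthogonality_case3 (n m : ℕ) (hn : 1 ≤ n) (hm : 1 ≤ m) :
    ∃ C > 0, ∀ j k : ℝ, k ≤ j →
      ∀ (x : EuclideanSpace ℝ (Fin n)) (y : EuclideanSpace ℝ (Fin m)),
        ‖y‖ ≤ (2 : ℝ) ^ j →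
        (∫ z : EuclideanSpace ℝ (Fin m),
            (2 : ℝ) ^ j * ((2 : ℝ) ^ j + ‖x‖ + ‖y - z‖) ^ (-((n : ℝ) + m + 1)) *
              ((2 : ℝ) ^ k * ((2 : ℝ) ^ k + ‖z‖) ^ (-((m : ℝ) + 1))))
          ≤ C * ((2 : ℝ) ^ j) ^ ((1 : ℝ) / 2) * ((2 : ℝ) ^ j + ‖x‖) ^ (-((n : ℝ) + 1 / 2)) *
              (((2 : ℝ) ^ j) ^ ((1 : ℝ) / 2) * ((2 : ℝ) ^ j + ‖y‖) ^ (-((m : ℝ) + 1 / 2))) := by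
  set Cm := ∫ w : EuclideanSpace ℝ (Fin m), (1 + ‖w‖) ^ (-((m : ℝ) + 1)) with hCm
  have hCmpos := key_pos m
  refine ⟨(2 : ℝ) ^ ((m : ℝ) + 1/2) * Cm, by positivity, ?_⟩
  intro j k _ x y hy
  set s : ℝ := (2 : ℝ) ^ j with hs
  set t : ℝ := (2 : ℝ) ^ k with ht
  have hspos : 0 < s := rpow_pos_of_pos two_pos j
  have htpos : 0 < t := rpow_pos_of_pos two_pos k
  have hsx : 0 < s + ‖x‖ := by positivity
  have hsy : 0 < s + ‖y‖ := by positivity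
  -- step 1 : pointwise bound and integral bound
  have step1 : (∫ z : EuclideanSpace ℝ (Fin m),
      s * (s + ‖x‖ + ‖y - z‖) ^ (-((n : ℝ) + m + 1)) *
        (t * (t + ‖z‖) ^ (-((m : ℝ) + 1))))
      ≤ s * (s + ‖x‖) ^ (-((n : ℝ) + m + 1)) * Cm := by
    have hint := key_integrable m t htpos
    have hg : Integrable (fun z : EuclideanSpace ℝ (Fin m) =>
        s * (s + ‖x‖) ^ (-((n : ℝ) + m + 1)) * (t * (t + ‖z‖) ^ (-((m : ℝ) + 1)))) :=
      hint.const_mul _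
    have hmono : (∫ z : EuclideanSpace ℝ (Fin m),
        s * (s + ‖x‖ + ‖y - z‖) ^ (-((n : ℝ) + m + 1)) *
          (t * (t + ‖z‖) ^ (-((m : ℝ) + 1))))
        ≤ ∫ z : EuclideanSpace ℝ (Fin m),
            s * (s + ‖x‖) ^ (-((n : ℝ) + m + 1)) * (t * (t + ‖z‖) ^ (-((m : ℝ) + 1))) := by
      refine integral_mono_of_nonneg (Filter.Eventually.of_forall fun z => by positivity) hg
        (Filter.Eventually.of_forall fun z => ?_)
      have hb : (s + ‖x‖ + ‖y - z‖) ^ (-((n : ℝ) + m + 1))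
          ≤ (s + ‖x‖) ^ (-((n : ℝ) + m + 1)) := by
        refine Real.rpow_le_rpow_of_nonpos hsx (by linarith [norm_nonneg (y - z)]) ?_
        have h0 : (0:ℝ) ≤ (n : ℝ) + m + 1 := by positivity
        linarith
      have hz : (0:ℝ) ≤ t * (t + ‖z‖) ^ (-((m : ℝ) + 1)) := by positivity
      exact mul_le_mul_of_nonneg_right (mul_le_mul_of_nonneg_left hb hspos.le) hz
    refine hmono.trans (le_of_eq ?_)
    rw [MeasureTheory.integral_const_mul, key_int m t htpos]
  -- step 2 : the constant gymnastics
  have split : (s + ‖x‖) ^ (-((n : ℝ) + m + 1)) =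
      (s + ‖x‖) ^ (-((n : ℝ) + 1/2)) * (s + ‖x‖) ^ (-((m : ℝ) + 1/2)) := by
    rw [← Real.rpow_add hsx]; ring_nf
  have h1 : (s + ‖x‖) ^ (-((m : ℝ) + 1/2)) ≤ s ^ (-((m : ℝ) + 1/2)) :=
    Real.rpow_le_rpow_of_nonpos hspos (by linarith [norm_nonneg x])
      (neg_nonpos.mpr (by positivity))
  have h2 : (2 : ℝ) ^ ((m : ℝ) + 1/2) * (2 * s) ^ (-((m : ℝ) + 1/2)) =
      s ^ (-((m : ℝ) + 1/2)) := by
    rw [Real.mul_rpow (by norm_num) hspos.le, ← mul_assoc, ← Real.rpow_add two_pos,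
      add_neg_cancel, Real.rpow_zero, one_mul]
  have h3 : (2 * s) ^ (-((m : ℝ) + 1/2)) ≤ (s + ‖y‖) ^ (-((m : ℝ) + 1/2)) :=
    Real.rpow_le_rpow_of_nonpos hsy (by linarith) (neg_nonpos.mpr (by positivity))
  have hss : s ^ ((1:ℝ)/2) * s ^ ((1:ℝ)/2) = s := by
    rw [← Real.rpow_add hspos]; norm_num
  calc (∫ z : EuclideanSpace ℝ (Fin m),
      s * (s + ‖x‖ + ‖y - z‖) ^ (-((n : ℝ) + m + 1)) *
        (t * (t + ‖z‖) ^ (-((m : ℝ) + 1))))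
      ≤ s * (s + ‖x‖) ^ (-((n : ℝ) + m + 1)) * Cm := step1
    _ ≤ s * ((s + ‖x‖) ^ (-((n : ℝ) + 1/2)) *
          ((2 : ℝ) ^ ((m : ℝ) + 1/2) * (s + ‖y‖) ^ (-((m : ℝ) + 1/2)))) * Cm := by
        apply mul_le_mul_of_nonneg_right _ hCmpos.le
        apply mul_le_mul_of_nonneg_left _ hspos.le
        rw [split]
        apply mul_le_mul_of_nonneg_left _ (by positivity)
        calc (s + ‖x‖) ^ (-((m : ℝ) + 1/2)) ≤ s ^ (-((m : ℝ) + 1/2)) := h1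
          _ = (2 : ℝ) ^ ((m : ℝ) + 1/2) * (2 * s) ^ (-((m : ℝ) + 1/2)) := h2.symm
          _ ≤ (2 : ℝ) ^ ((m : ℝ) + 1/2) * (s + ‖y‖) ^ (-((m : ℝ) + 1/2)) :=
            mul_le_mul_of_nonneg_left h3 (by positivity)
    _ = (2 : ℝ) ^ ((m : ℝ) + 1/2) * Cm * s ^ ((1:ℝ)/2) * (s + ‖x‖) ^ (-((n : ℝ) + 1/2)) *
          (s ^ ((1:ℝ)/2) * (s + ‖y‖) ^ (-((m : ℝ) + 1/2))) := by
        linear_combination (-(s + ‖x‖) ^ (-((n : ℝ) + 1/2)) *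
          (s + ‖y‖) ^ (-((m : ℝ) + 1/2)) * (2 : ℝ) ^ ((m : ℝ) + 1/2) * Cm) * hss

end
end

section
/- Let K : ℝ^N \ {0} → ℝ be a C¹ function satisfying |∂^α K(z)| ≤ C₀ |z|^{-N-|α|} for all multi-indices α with |α| ≤ 1, and let φ be a continuous function supported in the ball B(0, r) with ∫_{ℝ^N} φ = 0 and ‖φ‖_∞ ≤ A. Then for all z ∈ ℝ^N with |z| ≥ 3r, |(K ∗ φ)(z)| ≤ C C₀ A r^{N+1} |z|^{-(N+1)} for a constant C depending only on N. -/
/-! Since `∫ φ = 0`, `(K ∗ φ)(z) = ∫ (K (z - w) - K z) φ w`. For `‖w‖ ≤ r ≤ ‖z‖ / 3` the ball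
`closedBall z ‖w‖` stays at distance `≥ 2‖z‖/3` from the singularity, so the mean value
inequality and the derivative bound give `|K (z - w) - K z| ≤ (3/2)^(N+1) C₀ ‖z‖^(-(N+1)) r`.
Integrating against `|φ| ≤ A` over `closedBall 0 r`, of volume `r^N |closedBall 0 1|`, gives the
claim with `C = (3/2)^(N+1) |closedBall 0 1|`. -/

open MeasureTheory Real Set Metric Function

lemma two_thirds_mul_norm_le_norm_of_mem_closedBall {E : Type*} [NormedAddCommGroup E]
    {z x : E} {r : ℝ} (hz : 3 * r ≤ ‖z‖) (hx : x ∈ closedBall z r) : 2 / 3 * ‖z‖ ≤ ‖x‖ := by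
  have hxz : ‖x - z‖ ≤ r := by rwa [mem_closedBall, dist_eq_norm] at hx
  have := norm_sub_norm_le z x
  rw [norm_sub_rev] at this
  linarith

lemma rpow_neg_le_three_halves_rpow_mul {a b s : ℝ} (hs : 0 ≤ s) (hb : 0 < b)
    (hab : 2 / 3 * b ≤ a) : a ^ (-s) ≤ (3 / 2) ^ s * b ^ (-s) := calc
  a ^ (-s) ≤ (2 / 3 * b) ^ (-s) := rpow_le_rpow_of_nonpos (by positivity) hab (by linarith)
  _ = (3 / 2) ^ s * b ^ (-s) := by
    rw [mul_rpow (by norm_num) hb.le, rpow_neg (by norm_num), ← inv_rpow (by norm_num)]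
    norm_num

theorem norm_sub_le_of_norm_fderiv_le_rpow {E F : Type*} [NormedAddCommGroup E]
    [NormedSpace ℝ E] [NormedAddCommGroup F] [NormedSpace ℝ F] {K : E → F} {C₀ s : ℝ} {z w : E}
    (hK : DifferentiableOn ℝ K {0}ᶜ) (hK' : ∀ x ≠ 0, ‖fderiv ℝ K x‖ ≤ C₀ * ‖x‖ ^ (-s))
    (hC₀ : 0 ≤ C₀) (hs : 0 ≤ s) (hz : z ≠ 0) (hw : 3 * ‖w‖ ≤ ‖z‖) :
    ‖K (z - w) - K z‖ ≤ C₀ * (3 / 2) ^ s * ‖z‖ ^ (-s) * ‖w‖ := by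
  have hfar : ∀ x ∈ closedBall z ‖w‖, 2 / 3 * ‖z‖ ≤ ‖x‖ := fun x hx ↦
    two_thirds_mul_norm_le_norm_of_mem_closedBall hw hx
  have hz0 : 0 < ‖z‖ := norm_pos_iff.mpr hz
  have hne : ∀ x ∈ closedBall z ‖w‖, x ≠ 0 := by
    intro x hx h0
    have := hfar x hx
    rw [h0, norm_zero] at this
    linarith
  have hdiff : ∀ x ∈ closedBall z ‖w‖, DifferentiableAt ℝ K x := fun x hx ↦
    hK.differentiableAt (isOpen_compl_singleton.mem_nhds (hne x hx))
  have hbound : ∀ x ∈ closedBall z ‖w‖, ‖fderiv ℝ K x‖ ≤ C₀ * (3 / 2) ^ s * ‖z‖ ^ (-s) := by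
    intro x hx
    rw [mul_assoc]
    exact (hK' x (hne x hx)).trans <| mul_le_mul_of_nonneg_left
      (rpow_neg_le_three_halves_rpow_mul hs hz0 (hfar x hx)) hC₀
  have hzw : z - w ∈ closedBall z ‖w‖ := by simp
  simpa using (convex_closedBall z ‖w‖).norm_image_sub_le_of_norm_fderiv_le hdiff hbound
    (mem_closedBall_self (norm_nonneg w)) hzw

section Integrals

variable {α : Type*} [MeasurableSpace α] {μ : Measure α}

theorem integral_mul_eq_integral_sub_const_mul {g φ : α → ℝ}
    (hgφ : Integrable (fun w ↦ g w * φ w) μ) (hφ : Integrable φ μ) (hφ0 : ∫ w, φ w ∂μ = 0)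
    (c : ℝ) : ∫ w, g w * φ w ∂μ = ∫ w, (g w - c) * φ w ∂μ := by
  simp only [sub_mul]
  rw [integral_sub hgφ (hφ.const_mul c), integral_const_mul, hφ0, mul_zero, sub_zero]

theorem norm_integral_le_of_support_subset {G : Type*} [NormedAddCommGroup G] [NormedSpace ℝ G]
    {f : α → G} {s : Set α} {B : ℝ} (hs : μ s < ⊤) (hsupp : support f ⊆ s)
    (hf : ∀ x ∈ s, ‖f x‖ ≤ B) : ‖∫ x, f x ∂μ‖ ≤ B * μ.real s := by
  rw [← setIntegral_eq_integral_of_forall_compl_eq_zero fun x hx ↦ notMem_support.mp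
    fun h ↦ hx (hsupp h)]
  exact norm_setIntegral_le_of_norm_le_const hs hf

end Integrals

theorem integrable_comp_sub_mul_of_support_subset {E : Type*} [NormedAddCommGroup E]
    [ProperSpace E] [MeasurableSpace E] [BorelSpace E] {μ : Measure E}
    [IsFiniteMeasureOnCompacts μ] {K φ : E → ℝ} {r : ℝ} {z : E}
    (hK : ContinuousOn K {0}ᶜ) (hφ : Continuous φ) (hsupp : support φ ⊆ closedBall 0 r)
    (hz : r < ‖z‖) : Integrable (fun w ↦ K (z - w) * φ w) μ := by
  have hsub : MapsTo (fun w ↦ z - w) (closedBall 0 r) {0}ᶜ := by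
    intro w hw h0
    rw [mem_closedBall_zero_iff] at hw
    rw [mem_singleton_iff, sub_eq_zero] at h0
    exact hz.not_ge (h0 ▸ hw)
  rw [← integrableOn_iff_integrable_of_support_subset
    ((support_mul_subset_right _ _).trans hsupp)]
  exact ((hK.comp (by fun_prop) hsub).mul hφ.continuousOn).integrableOn_compact
    (isCompact_closedBall 0 r)

theorem conv_cancellation_decay_general (N : ℕ) :
    ∃ C > 0, ∀ (C₀ A r : ℝ), 0 < C₀ → 0 < A → 0 < r →
      ∀ K : EuclideanSpace ℝ (Fin N) → ℝ,
        ContDiffOn ℝ 1 K {0}ᶜ →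
        (∀ z : EuclideanSpace ℝ (Fin N), z ≠ 0 → |K z| ≤ C₀ * ‖z‖ ^ (-(N : ℝ))) →
        (∀ z : EuclideanSpace ℝ (Fin N), z ≠ 0 →
          ‖fderiv ℝ K z‖ ≤ C₀ * ‖z‖ ^ (-((N : ℝ) + 1))) →
      ∀ φ : EuclideanSpace ℝ (Fin N) → ℝ,
        Continuous φ →
        Function.support φ ⊆ Metric.closedBall 0 r →
        (∫ w, φ w) = 0 →
        (∀ w, |φ w| ≤ A) →
      ∀ z : EuclideanSpace ℝ (Fin N), 3 * r ≤ ‖z‖ →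
        |∫ w, K (z - w) * φ w| ≤ C * C₀ * A * r ^ ((N : ℝ) + 1) * ‖z‖ ^ (-((N : ℝ) + 1)) := by
  set V := volume.real (closedBall (0 : EuclideanSpace ℝ (Fin N)) 1)
  have hV : 0 < V := ENNReal.toReal_pos (measure_closedBall_pos volume 0 one_pos).ne'
    measure_closedBall_lt_top.ne
  refine ⟨(3 / 2) ^ ((N : ℝ) + 1) * V, by positivity, ?_⟩
  intro C₀ A r hC₀ hA hr K hK _ hK' φ hφ hsupp hφ0 hφA z hz
  have hz0 : z ≠ 0 := norm_pos_iff.mp (by linarith)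
  have hφi : Integrable φ :=
    hφ.integrable_of_hasCompactSupport (HasCompactSupport.intro (isCompact_closedBall 0 r)
      fun w hw ↦ notMem_support.mp fun h ↦ hw (hsupp h))
  have hKφ := integrable_comp_sub_mul_of_support_subset (μ := volume) hK.continuousOn hφ hsupp
    (by linarith)
  have hbound : ∀ w ∈ closedBall (0 : EuclideanSpace ℝ (Fin N)) r,
      ‖(K (z - w) - K z) * φ w‖ ≤
        C₀ * (3 / 2) ^ ((N : ℝ) + 1) * ‖z‖ ^ (-((N : ℝ) + 1)) * r * A := by
    intro w hw
    rw [mem_closedBall_zero_iff] at hw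
    rw [norm_mul]
    refine mul_le_mul ?_ (hφA w) (norm_nonneg _) (by positivity)
    refine (norm_sub_le_of_norm_fderiv_le_rpow (hK.differentiableOn one_ne_zero) hK' hC₀.le
      (by positivity) hz0 (by linarith)).trans ?_
    gcongr
  calc |∫ w, K (z - w) * φ w| = ‖∫ w, (K (z - w) - K z) * φ w‖ := by
        rw [integral_mul_eq_integral_sub_const_mul hKφ hφi hφ0 (K z), Real.norm_eq_abs]
    _ ≤ _ := norm_integral_le_of_support_subset measure_closedBall_lt_top
        ((support_mul_subset_right _ _).trans hsupp) hbound
    _ = _ := by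
      rw [Measure.addHaar_real_closedBall' _ _ hr.le, finrank_euclideanSpace_fin,
        rpow_add hr, rpow_one, rpow_natCast]
      ring

/-- If `K` is `C¹` away from the origin on `ℝ^N` with `|∂^α K(z)| ≤ C₀ |z|^{-N-|α|}` for
`|α| ≤ 1`, and `φ` is continuous, supported in `B(0,r)`, with mean zero and `‖φ‖_∞ ≤ A`,
then for `|z| ≥ 3r` one has `|(K ∗ φ)(z)| ≤ C C₀ A r^{N+1} |z|^{-(N+1)}`, with `C = C(N)`. -/
theorem conv_cancellation_decay (N : ℕ) (hN : 1 ≤ N) :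
    ∃ C > 0, ∀ (C₀ A r : ℝ), 0 < C₀ → 0 < A → 0 < r →
      ∀ K : EuclideanSpace ℝ (Fin N) → ℝ,
        ContDiffOn ℝ 1 K {0}ᶜ →
        (∀ z : EuclideanSpace ℝ (Fin N), z ≠ 0 → |K z| ≤ C₀ * ‖z‖ ^ (-(N : ℝ))) →
        (∀ z : EuclideanSpace ℝ (Fin N), z ≠ 0 →
          ‖fderiv ℝ K z‖ ≤ C₀ * ‖z‖ ^ (-((N : ℝ) + 1))) →
      ∀ φ : EuclideanSpace ℝ (Fin N) → ℝ,
        Continuous φ →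
        Function.support φ ⊆ Metric.closedBall 0 r →
        (∫ w, φ w) = 0 →
        (∀ w, |φ w| ≤ A) →
      ∀ z : EuclideanSpace ℝ (Fin N), 3 * r ≤ ‖z‖ →
        |∫ w, K (z - w) * φ w| ≤ C * C₀ * A * r ^ ((N : ℝ) + 1) * ‖z‖ ^ (-((N : ℝ) + 1)) :=
  conv_cancellation_decay_general N
end

section
/- Let n, m ≥ 1, 0 < r ≤ 1, and let j, j', k, k' ∈ ℤ. For each pair of dyadic cubes I' ⊂ ℝ^n with side length 2^{j'} and J' ⊂ ℝ^m with side length 2^{j'∨k'}, let a_{I',J'} ≥ 0, and let x_{I'} ∈ I', y_{J'} ∈ J'. Set s = 2^{j∨j'}, t = 2^{(j∨j')∨(k∨k')}. Then for all u ∈ ℝ^n, v ∈ ℝ^m, Σ_{I',J'} s^{1/2} t^{1/2} |I'||J'| a_{I',J'} / [(s + |u − x_{I'}|)^{n+1/2} (t + |v − y_{J'}|)^{m+1/2}] ≤ C · 2^{[n(j∨j'−j') + m((j∨j')∨(k∨k')−(j'∨k'))](1/r − 1)} · [M_s(Σ_{I',J'} a_{I',J'}^r χ_{I'×J'})(u,v)]^{1/r},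 provided r > max(2n/(2n+1), 2m/(2m+1)), where M_s is the strong maximal operator over rectangles in ℝ^n × ℝ^m. -/
open MeasureTheory Real Set
open scoped ENNReal

noncomputable section

/-- The dyadic cube of ℝ^n with side length `2^j` indexed by `k ∈ ℤ^n`. -/
def dyadicCube (n : ℕ) (j : ℤ) (k : Fin n → ℤ) : Set (EuclideanSpace ℝ (Fin n)) :=
  {x | ∀ i, (k i : ℝ) * 2 ^ j ≤ x i ∧ x i < ((k i : ℝ) + 1) * 2 ^ j}

/-- The strong maximal operator on ℝ^n × ℝ^m (averages over products of balls,
i.e. rectangles, containing the point). -/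
def strongMax (n m : ℕ)
    (f : EuclideanSpace ℝ (Fin n) × EuclideanSpace ℝ (Fin m) → ℝ≥0∞)
    (p : EuclideanSpace ℝ (Fin n) × EuclideanSpace ℝ (Fin m)) : ℝ≥0∞ :=
  ⨆ (c₁ : EuclideanSpace ℝ (Fin n)) (ρ₁ : ℝ) (c₂ : EuclideanSpace ℝ (Fin m)) (ρ₂ : ℝ)
    (_ : p ∈ Metric.ball c₁ ρ₁ ×ˢ Metric.ball c₂ ρ₂),
    (volume (Metric.ball c₁ ρ₁ ×ˢ Metric.ball c₂ ρ₂))⁻¹ *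
      ∫⁻ y in Metric.ball c₁ ρ₁ ×ˢ Metric.ball c₂ ρ₂, f y

/-! Sort the rectangles `I' × J'` by dyadic annuli around `(u, v)`: `I'` lies in annulus `i` if
`|u - x_{I'}| < 2^i s ≤ 2 (s + |u - x_{I'}|)`, and `J'` in annulus `i'` likewise at scale `t`. Since
`r ≤ 1`, `(∑ b)^r ≤ ∑ b^r`, so it suffices to bound the `r`-th powers. On the fibre `(i, i')`
each Poisson factor is at most a fixed multiple of `2^{-i(n+1/2)} 2^{-i'(m+1/2)}`, and all the
rectangles lie in the rectangle `B = ball(u, 2^{i+n} s) × ball(v, 2^{i'+m} t)`, whence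
`∑ a^r |I'| |J'| ≤ |B| · M_s(∑ a^r χ_{I'×J'})(u, v)`. What remains is a double geometric series
with ratios `2^{n - r(n+1/2)}` and `2^{m - r(m+1/2)}`, finite exactly when
`r > max(2n/(2n+1), 2m/(2m+1))`. -/

open Metric

def twoPow (e : ℝ) : ℝ≥0∞ := 2 ^ e

theorem twoPow_pos (e : ℝ) : 0 < twoPow e :=
  ENNReal.rpow_pos (by norm_num) (by norm_num)

theorem twoPow_ne_top (e : ℝ) : twoPow e ≠ ⊤ :=
  ENNReal.rpow_ne_top_of_nonneg' (by norm_num) (by norm_num)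

theorem twoPow_add (a b : ℝ) : twoPow (a + b) = twoPow a * twoPow b :=
  ENNReal.rpow_add _ _ (by norm_num) (by norm_num)

theorem twoPow_div (a b : ℝ) : twoPow a / twoPow b = twoPow (a - b) :=
  (ENNReal.rpow_sub _ _ (by norm_num) (by norm_num)).symm

theorem twoPow_rpow (a b : ℝ) : twoPow a ^ b = twoPow (a * b) :=
  (ENNReal.rpow_mul 2 a b).symm

theorem twoPow_pow (a : ℝ) (k : ℕ) : twoPow a ^ k = twoPow (a * k) := by
  rw [← ENNReal.rpow_natCast, twoPow_rpow]

theorem two_zpow_eq_twoPow (z : ℤ) : (2 : ℝ≥0∞) ^ z = twoPow z :=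
  (ENNReal.rpow_intCast 2 z).symm

theorem ofReal_two_zpow (z : ℤ) : ENNReal.ofReal ((2 : ℝ) ^ z) = twoPow z := by
  rw [← Real.rpow_intCast, ← ENNReal.ofReal_rpow_of_pos two_pos, ENNReal.ofReal_ofNat, twoPow]

theorem twoPow_lt_one {e : ℝ} (he : e < 0) : twoPow e < 1 :=
  ENNReal.rpow_lt_one_of_one_lt_of_neg (by norm_num) he

namespace ENNReal

theorem tsum_le_rpow_tsum_rpow {ι : Type*} (f : ι → ℝ≥0∞) {r : ℝ} (hr₀ : 0 < r) (hr₁ : r ≤ 1) :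
    ∑' i, f i ≤ (∑' i, f i ^ r) ^ (1 / r) := by
  have finite_sum : ∀ s : Finset ι, (∑ i ∈ s, f i) ^ r ≤ ∑ i ∈ s, f i ^ r := by
    intro s
    induction s using Finset.cons_induction with
    | empty => simp [ENNReal.zero_rpow_of_pos hr₀]
    | cons a s ha ih =>
      rw [Finset.sum_cons, Finset.sum_cons]
      exact (ENNReal.rpow_add_le_add_rpow _ _ hr₀.le hr₁).trans (by gcongr)
  rw [ENNReal.tsum_eq_iSup_sum, one_div]
  refine iSup_le fun s => (ENNReal.le_rpow_inv_iff hr₀).2 ?_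
  exact (finite_sum s).trans (ENNReal.sum_le_tsum s)

theorem tsum_le_mul_tsum_of_fiberwise {α β : Type*} (Φ : α → β) {b a : α → ℝ≥0∞}
    {w μ : β → ℝ≥0∞} {M : ℝ≥0∞} (hb : ∀ q, b q ≤ w (Φ q) * a q)
    (ha : ∀ p, ∑' q : Φ ⁻¹' {p}, a q ≤ M * μ p) :
    ∑' q, b q ≤ M * ∑' p, w p * μ p := by
  rw [← ENNReal.tsum_fiberwise b Φ, ← ENNReal.tsum_mul_left]
  refine ENNReal.tsum_le_tsum fun p => ?_
  calc ∑' q : Φ ⁻¹' {p}, b q ≤ ∑' q : Φ ⁻¹' {p}, w p * a q :=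
        ENNReal.tsum_le_tsum fun ⟨q, hq⟩ => by
          simpa only [Set.mem_singleton_iff.1 hq] using hb q
    _ = w p * ∑' q : Φ ⁻¹' {p}, a q := ENNReal.tsum_mul_left
    _ ≤ w p * (M * μ p) := by gcongr; exact ha p
    _ = M * (w p * μ p) := mul_left_comm _ _ _

theorem tsum_prod_mul {α β : Type*} (f : α → ℝ≥0∞) (g : β → ℝ≥0∞) :
    ∑' p : α × β, f p.1 * g p.2 = (∑' a, f a) * ∑' b, g b := by
  rw [ENNReal.tsum_prod (f := fun a b => f a * g b)]
  simp_rw [ENNReal.tsum_mul_left, ENNReal.tsum_mul_right]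

end ENNReal

theorem EuclideanSpace.norm_le_sum_norm {ι : Type*} [Fintype ι] (x : EuclideanSpace ℝ ι) :
    ‖x‖ ≤ ∑ i, ‖x i‖ := by
  refine abs_le_of_sq_le_sq' ?_ (by positivity) |>.2
  rw [EuclideanSpace.norm_sq_eq]
  exact Finset.sum_sq_le_sq_sum_of_nonneg fun _ _ => norm_nonneg _

theorem exists_two_pow_mul_bracket {s d : ℝ} (hs : 0 < s) (hd : 0 ≤ d) :
    ∃ i : ℕ, d < 2 ^ i * s ∧ 2 ^ i * s ≤ 2 * (s + d) := by
  have hex : ∃ i : ℕ, d < 2 ^ i * s := by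
    obtain ⟨i, hi⟩ := pow_unbounded_of_one_lt (d / s) one_lt_two
    exact ⟨i, (div_lt_iff₀ hs).1 hi⟩
  classical
  refine ⟨Nat.find hex, Nat.find_spec hex, ?_⟩
  cases h : Nat.find hex with
  | zero => linarith
  | succ i =>
    have hi : 2 ^ i * s ≤ d := not_lt.1 (Nat.find_min hex (by omega))
    rw [pow_succ]
    linarith

section Dyadic

variable {n : ℕ}

theorem dyadicCube_eq_preimage (j : ℤ) (κ : Fin n → ℤ) :
    dyadicCube n j κ = (MeasurableEquiv.toLp 2 (Fin n → ℝ)).symm ⁻¹'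
      univ.pi fun i => Ico ((κ i : ℝ) * 2 ^ j) ((κ i + 1) * 2 ^ j) := by
  ext x
  simp [dyadicCube, mem_pi, mem_Ico]

theorem measurableSet_dyadicCube (j : ℤ) (κ : Fin n → ℤ) : MeasurableSet (dyadicCube n j κ) := by
  rw [dyadicCube_eq_preimage]
  exact (MeasurableEquiv.measurable _) (.univ_pi fun _ => measurableSet_Ico)

theorem volume_dyadicCube (j : ℤ) (κ : Fin n → ℤ) : volume (dyadicCube n j κ) = twoPow (j * n) := by
  rw [dyadicCube_eq_preimage,
    (EuclideanSpace.volume_preserving_symm_measurableEquiv_toLp (Fin n)).measure_preimage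
      (MeasurableSet.univ_pi fun _ => measurableSet_Ico).nullMeasurableSet,
    volume_pi_pi]
  simp_rw [Real.volume_Ico, ← sub_mul, add_sub_cancel_left, one_mul, ofReal_two_zpow]
  simp [twoPow_pow]

theorem norm_sub_le_of_mem_dyadicCube {j : ℤ} {κ : Fin n → ℤ} {x z : EuclideanSpace ℝ (Fin n)}
    (hx : x ∈ dyadicCube n j κ) (hz : z ∈ dyadicCube n j κ) : ‖x - z‖ ≤ n * 2 ^ j := by
  have coord : ∀ i, ‖(x - z) i‖ ≤ 2 ^ j := fun i => by
    obtain ⟨hx₁, hx₂⟩ := hx i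
    obtain ⟨hz₁, hz₂⟩ := hz i
    rw [PiLp.sub_apply, Real.norm_eq_abs, abs_sub_le_iff]
    constructor <;> linarith
  calc ‖x - z‖ ≤ ∑ i, ‖(x - z) i‖ := EuclideanSpace.norm_le_sum_norm _
    _ ≤ ∑ _i : Fin n, (2 : ℝ) ^ j := Finset.sum_le_sum fun i _ => coord i
    _ = n * 2 ^ j := by simp

theorem exists_annulus_of_mem_dyadicCube {ℓ J : ℤ} (hℓ : ℓ ≤ J) {κ : Fin n → ℤ}
    {x : EuclideanSpace ℝ (Fin n)} (hx : x ∈ dyadicCube n ℓ κ) (u : EuclideanSpace ℝ (Fin n)) :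
    ∃ i : ℕ, (2 : ℝ) ^ ((i : ℤ) + J - 1) ≤ 2 ^ J + ‖u - x‖ ∧
      dyadicCube n ℓ κ ⊆ ball u (2 ^ ((i : ℤ) + J + n)) := by
  obtain ⟨i, hnear, hfar⟩ :=
    exists_two_pow_mul_bracket (zpow_pos two_pos J) (norm_nonneg (u - x))
  have h2 : (2 : ℝ) ≠ 0 := two_ne_zero
  refine ⟨i, ?_, fun z hz => ?_⟩
  · rw [zpow_sub₀ h2, zpow_add₀ h2, zpow_natCast, zpow_one]
    linarith
  have hcube : ‖x - z‖ ≤ n * (2 ^ i * 2 ^ J) := by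
    refine (norm_sub_le_of_mem_dyadicCube hx hz).trans (mul_le_mul_of_nonneg_left ?_ n.cast_nonneg)
    calc (2 : ℝ) ^ ℓ ≤ 2 ^ J := zpow_le_zpow_right₀ one_le_two hℓ
      _ ≤ 2 ^ i * 2 ^ J := le_mul_of_one_le_left (by positivity) (one_le_pow₀ one_le_two)
  have hn : (n : ℝ) + 1 ≤ 2 ^ n := by exact_mod_cast Nat.lt_two_pow_self
  rw [mem_ball, dist_comm, dist_eq_norm]
  calc ‖u - z‖ ≤ ‖u - x‖ + ‖x - z‖ := norm_sub_le_norm_sub_add_norm_sub u x z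
    _ < (n + 1) * (2 ^ i * 2 ^ J) := by linarith
    _ ≤ 2 ^ n * (2 ^ i * 2 ^ J) := by gcongr
    _ = 2 ^ ((i : ℤ) + J + n) := by
      rw [zpow_add₀ h2, zpow_add₀ h2, zpow_natCast, zpow_natCast]
      ring

end Dyadic

section StrongMax

variable {n m : ℕ}

theorem le_strongMax (f : EuclideanSpace ℝ (Fin n) × EuclideanSpace ℝ (Fin m) → ℝ≥0∞)
    {p : EuclideanSpace ℝ (Fin n) × EuclideanSpace ℝ (Fin m)}
    {c₁ : EuclideanSpace ℝ (Fin n)} {ρ₁ : ℝ} {c₂ : EuclideanSpace ℝ (Fin m)} {ρ₂ : ℝ}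
    (hp : p ∈ ball c₁ ρ₁ ×ˢ ball c₂ ρ₂) :
    (volume (ball c₁ ρ₁ ×ˢ ball c₂ ρ₂))⁻¹ * ∫⁻ y in ball c₁ ρ₁ ×ˢ ball c₂ ρ₂, f y ≤
      strongMax n m f p :=
  le_iSup_of_le c₁ <| le_iSup_of_le ρ₁ <| le_iSup_of_le c₂ <| le_iSup₂_of_le ρ₂ hp le_rfl

theorem tsum_mul_volume_le_strongMax {ι : Type*} [Countable ι] (g : ι → ℝ≥0∞)
    {R : ι → Set (EuclideanSpace ℝ (Fin n) × EuclideanSpace ℝ (Fin m))}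
    (hR : ∀ q, MeasurableSet (R q)) {S : Set ι}
    {u : EuclideanSpace ℝ (Fin n)} {v : EuclideanSpace ℝ (Fin m)} {ρ₁ ρ₂ : ℝ}
    (hρ₁ : 0 < ρ₁) (hρ₂ : 0 < ρ₂) (hS : ∀ q ∈ S, R q ⊆ ball u ρ₁ ×ˢ ball v ρ₂) :
    ∑' q : S, g q * volume (R q) ≤ volume (ball u ρ₁) * volume (ball v ρ₂) *
      strongMax n m (fun x => ∑' q, g q * (R q).indicator 1 x) (u, v) := by
  set B := ball u ρ₁ ×ˢ ball v ρ₂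
  have hvolB : volume B = volume (ball u ρ₁) * volume (ball v ρ₂) := by
    rw [Measure.volume_eq_prod, Measure.prod_prod]
  have hB₀ : volume B ≠ 0 := by
    rw [hvolB]
    exact mul_ne_zero (measure_ball_pos _ u hρ₁).ne' (measure_ball_pos _ v hρ₂).ne'
  have hB_top : volume B ≠ ⊤ := by
    rw [hvolB]
    exact ENNReal.mul_ne_top measure_ball_lt_top.ne measure_ball_lt_top.ne
  rw [← hvolB]
  calc ∑' q : S, g q * volume (R q) = ∑' q : S, ∫⁻ x in B, g q * (R q).indicator 1 x := by
        refine tsum_congr fun q => ?_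
        rw [lintegral_const_mul _ (measurable_one.indicator (hR q)),
          lintegral_indicator_one (hR q), Measure.restrict_apply (hR q),
          inter_eq_left.2 (hS q q.2)]
    _ = ∫⁻ x in B, ∑' q : S, g q * (R q).indicator 1 x :=
        (lintegral_tsum fun q : S =>
          ((measurable_one.indicator (hR q)).const_mul (g q)).aemeasurable).symm
    _ ≤ ∫⁻ x in B, ∑' q, g q * (R q).indicator 1 x :=
        lintegral_mono fun x => ENNReal.tsum_comp_le_tsum_of_injective Subtype.val_injective _
    _ = volume B * ((volume B)⁻¹ * ∫⁻ x in B, ∑' q, g q * (R q).indicator 1 x) := by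
        rw [← mul_assoc, ENNReal.mul_inv_cancel hB₀ hB_top, one_mul]
    _ ≤ volume B * strongMax n m (fun x => ∑' q, g q * (R q).indicator 1 x) (u, v) := by
        gcongr
        exact le_strongMax _ ⟨mem_ball_self hρ₁, mem_ball_self hρ₂⟩

theorem tsum_le_strongMax_mul_of_dyadic_subset {ℓ₁ ℓ₂ : ℤ}
    (g : (Fin n → ℤ) × (Fin m → ℤ) → ℝ≥0∞) {S : Set ((Fin n → ℤ) × (Fin m → ℤ))}
    {u : EuclideanSpace ℝ (Fin n)} {v : EuclideanSpace ℝ (Fin m)} {ρ₁ ρ₂ : ℝ}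
    (hρ₁ : 0 < ρ₁) (hρ₂ : 0 < ρ₂)
    (hS : ∀ q ∈ S, dyadicCube n ℓ₁ q.1 ×ˢ dyadicCube m ℓ₂ q.2 ⊆ ball u ρ₁ ×ˢ ball v ρ₂) :
    ∑' q : S, g q ≤ strongMax n m (fun x => ∑' q, g q *
        (dyadicCube n ℓ₁ q.1 ×ˢ dyadicCube m ℓ₂ q.2).indicator 1 x) (u, v) *
      (volume (ball u ρ₁) / twoPow (ℓ₁ * n) * (volume (ball v ρ₂) / twoPow (ℓ₂ * m))) := by
  have hmass := tsum_mul_volume_le_strongMax g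
    (fun q => (measurableSet_dyadicCube ℓ₁ q.1).prod (measurableSet_dyadicCube ℓ₂ q.2)) hρ₁ hρ₂ hS
  simp_rw [Measure.volume_eq_prod, Measure.prod_prod, volume_dyadicCube,
    ENNReal.tsum_mul_right] at hmass
  rw [← ENNReal.mul_div_mul_comm (.inl (twoPow_pos _).ne') (.inl (twoPow_ne_top _)),
    ← mul_div_assoc, ENNReal.le_div_iff_mul_le
      (.inl (ENNReal.mul_pos (twoPow_pos _).ne' (twoPow_pos _).ne').ne')
      (.inl (ENNReal.mul_ne_top (twoPow_ne_top _) (twoPow_ne_top _)))]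
  exact hmass.trans_eq (mul_comm _ _)

end StrongMax

def poissonWeight (n : ℕ) (J ℓ : ℤ) (d : ℝ) : ℝ≥0∞ :=
  ((2 : ℝ≥0∞) ^ J) ^ ((1 : ℝ) / 2) * (2 : ℝ≥0∞) ^ (ℓ * (n : ℤ)) /
    ((2 : ℝ≥0∞) ^ J + ENNReal.ofReal d) ^ ((n : ℝ) + 1 / 2)

theorem poissonWeight_le {n : ℕ} {J ℓ : ℤ} {d : ℝ} {i : ℕ}
    (hi : (2 : ℝ) ^ ((i : ℤ) + J - 1) ≤ 2 ^ J + d) :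
    poissonWeight n J ℓ d ≤ twoPow (J / 2 + ℓ * n - (i + J - 1) * (n + 1 / 2)) := by
  have hbase : twoPow ((i : ℤ) + J - 1 : ℤ) ≤ (2 : ℝ≥0∞) ^ J + ENNReal.ofReal d := by
    rw [← ofReal_two_zpow, two_zpow_eq_twoPow, ← ofReal_two_zpow]
    exact (ENNReal.ofReal_le_ofReal hi).trans ENNReal.ofReal_add_le
  have hdenom := ENNReal.rpow_le_rpow hbase (by positivity : (0 : ℝ) ≤ n + 1 / 2)
  rw [twoPow_rpow] at hdenom
  refine (ENNReal.div_le_div_left hdenom _).trans_eq ?_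
  rw [two_zpow_eq_twoPow, two_zpow_eq_twoPow, twoPow_rpow, ← twoPow_add, twoPow_div]
  push_cast
  ring_nf

theorem div_eq_poissonWeight_mul_poissonWeight {n m : ℕ} (J₁ J₂ ℓ₁ ℓ₂ : ℤ) (d₁ d₂ : ℝ) (c : ℝ≥0∞) :
    ((2 : ℝ≥0∞) ^ J₁) ^ ((1 : ℝ) / 2) * ((2 : ℝ≥0∞) ^ J₂) ^ ((1 : ℝ) / 2) *
        ((2 : ℝ≥0∞) ^ (ℓ₁ * (n : ℤ)) * (2 : ℝ≥0∞) ^ (ℓ₂ * (m : ℤ))) * c /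
      (((2 : ℝ≥0∞) ^ J₁ + ENNReal.ofReal d₁) ^ ((n : ℝ) + 1 / 2) *
        ((2 : ℝ≥0∞) ^ J₂ + ENNReal.ofReal d₂) ^ ((m : ℝ) + 1 / 2)) =
      poissonWeight n J₁ ℓ₁ d₁ * poissonWeight m J₂ ℓ₂ d₂ * c := by
  have hpos (k : ℕ) (J : ℤ) (d : ℝ) :
      ((2 : ℝ≥0∞) ^ J + ENNReal.ofReal d) ^ ((k : ℝ) + 1 / 2) ≠ 0 := by
    rw [two_zpow_eq_twoPow]
    exact (ENNReal.rpow_pos ((twoPow_pos J).trans_le le_self_add)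
      (ENNReal.add_ne_top.2 ⟨twoPow_ne_top _, ENNReal.ofReal_ne_top⟩)).ne'
  rw [div_eq_mul_inv, ENNReal.mul_inv (.inl (hpos n J₁ d₁)) (.inr (hpos m J₂ d₂))]
  simp only [poissonWeight, div_eq_mul_inv]
  ring

/-- In `2^{r(n+1/2) + n²}`, the factor `2^{r(n+1/2)}` pays for estimating the Poisson factor at
`2^{i+J-1}` rather than `2^{i+J}`, and `2^{n²}` for covering the cubes by balls of radius
`2^{i+J+n}`. -/
def annulusConst (n : ℕ) (r : ℝ) : ℝ≥0∞ :=
  volume (ball (0 : EuclideanSpace ℝ (Fin n)) 1) * twoPow (r * (n + 1 / 2) + n ^ 2) *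
    ∑' i : ℕ, twoPow (n - r * (n + 1 / 2)) ^ i

theorem annulusConst_pos (n : ℕ) (r : ℝ) : 0 < annulusConst n r := by
  have hsum : 1 ≤ ∑' i : ℕ, twoPow (n - r * (n + 1 / 2)) ^ i :=
    (pow_zero _).symm.trans_le (ENNReal.le_tsum 0)
  exact ENNReal.mul_pos (ENNReal.mul_pos (measure_ball_pos volume _ one_pos).ne'
    (twoPow_pos _).ne').ne' (zero_lt_one.trans_le hsum).ne'

theorem annulusConst_ne_top {n : ℕ} {r : ℝ} (h : (2 * n : ℝ) / (2 * n + 1) < r) :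
    annulusConst n r ≠ ⊤ := by
  rw [div_lt_iff₀ (by positivity)] at h
  refine ENNReal.mul_ne_top (ENNReal.mul_ne_top measure_ball_lt_top.ne (twoPow_ne_top _)) ?_
  rw [ENNReal.tsum_geometric]
  exact ENNReal.inv_ne_top.2 (tsub_pos_of_lt (twoPow_lt_one (by linarith))).ne'

theorem tsum_twoPow_mul_volume_ball (n : ℕ) (r : ℝ) (J ℓ : ℤ) (u : EuclideanSpace ℝ (Fin n)) :
    ∑' i : ℕ, twoPow (J / 2 + ℓ * n - (i + J - 1) * (n + 1 / 2)) ^ r *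
        (volume (ball u (2 ^ ((i : ℤ) + J + n))) / twoPow (ℓ * n)) =
      annulusConst n r * twoPow ((1 - r) * (n * (J - ℓ))) := by
  have hterm : ∀ i : ℕ, twoPow (J / 2 + ℓ * n - (i + J - 1) * (n + 1 / 2)) ^ r *
      (volume (ball u (2 ^ ((i : ℤ) + J + n))) / twoPow (ℓ * n)) =
      volume (ball (0 : EuclideanSpace ℝ (Fin n)) 1) * twoPow (r * (n + 1 / 2) + n ^ 2) *
        twoPow ((1 - r) * (n * (J - ℓ))) * twoPow (n - r * (n + 1 / 2)) ^ i := by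
    intro i
    rw [Measure.addHaar_ball_of_pos _ _ (zpow_pos two_pos _), finrank_euclideanSpace_fin,
      ← zpow_natCast, ← zpow_mul, ofReal_two_zpow, twoPow_rpow, twoPow_pow, mul_comm _ (volume _),
      mul_div_assoc, twoPow_div, mul_left_comm, ← twoPow_add, mul_assoc, mul_assoc, ← twoPow_add,
      ← twoPow_add]
    congr 2
    push_cast
    ring
  simp_rw [hterm, ENNReal.tsum_mul_left, annulusConst]
  ring

theorem tsum_rpow_poissonWeight_le {n m : ℕ} {r : ℝ} (hr₀ : 0 < r)
    {ℓ₁ J₁ ℓ₂ J₂ : ℤ} (hℓ₁ : ℓ₁ ≤ J₁) (hℓ₂ : ℓ₂ ≤ J₂)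
    (a : (Fin n → ℤ) × (Fin m → ℤ) → ℝ≥0∞)
    {xI : (Fin n → ℤ) → EuclideanSpace ℝ (Fin n)} {yJ : (Fin m → ℤ) → EuclideanSpace ℝ (Fin m)}
    (hxI : ∀ κ, xI κ ∈ dyadicCube n ℓ₁ κ) (hyJ : ∀ κ, yJ κ ∈ dyadicCube m ℓ₂ κ)
    (u : EuclideanSpace ℝ (Fin n)) (v : EuclideanSpace ℝ (Fin m)) :
    ∑' q, (poissonWeight n J₁ ℓ₁ ‖u - xI q.1‖ * poissonWeight m J₂ ℓ₂ ‖v - yJ q.2‖ * a q) ^ r ≤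
      strongMax n m (fun x => ∑' q, a q ^ r *
          (dyadicCube n ℓ₁ q.1 ×ˢ dyadicCube m ℓ₂ q.2).indicator 1 x) (u, v) *
        (annulusConst n r * twoPow ((1 - r) * (n * (J₁ - ℓ₁))) *
          (annulusConst m r * twoPow ((1 - r) * (m * (J₂ - ℓ₂))))) := by
  choose φ₁ hφ₁ hball₁ using fun κ => exists_annulus_of_mem_dyadicCube hℓ₁ (hxI κ) u
  choose φ₂ hφ₂ hball₂ using fun κ => exists_annulus_of_mem_dyadicCube hℓ₂ (hyJ κ) v
  set M := strongMax n m (fun x => ∑' q, a q ^ r *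
    (dyadicCube n ℓ₁ q.1 ×ˢ dyadicCube m ℓ₂ q.2).indicator 1 x) (u, v)
  set w₁ : ℕ → ℝ≥0∞ := fun i => twoPow (J₁ / 2 + ℓ₁ * n - (i + J₁ - 1) * (n + 1 / 2)) ^ r
  set w₂ : ℕ → ℝ≥0∞ := fun i => twoPow (J₂ / 2 + ℓ₂ * m - (i + J₂ - 1) * (m + 1 / 2)) ^ r
  set μ₁ : ℕ → ℝ≥0∞ := fun i => volume (ball u (2 ^ ((i : ℤ) + J₁ + n))) / twoPow (ℓ₁ * n)
  set μ₂ : ℕ → ℝ≥0∞ := fun i => volume (ball v (2 ^ ((i : ℤ) + J₂ + m))) / twoPow (ℓ₂ * m)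
  have hweight : ∀ q : (Fin n → ℤ) × (Fin m → ℤ),
      (poissonWeight n J₁ ℓ₁ ‖u - xI q.1‖ * poissonWeight m J₂ ℓ₂ ‖v - yJ q.2‖ * a q) ^ r ≤
        w₁ (φ₁ q.1) * w₂ (φ₂ q.2) * a q ^ r := by
    intro q
    rw [ENNReal.mul_rpow_of_nonneg _ _ hr₀.le, ENNReal.mul_rpow_of_nonneg _ _ hr₀.le]
    gcongr
    · exact ENNReal.rpow_le_rpow (poissonWeight_le (hφ₁ q.1)) hr₀.le
    · exact ENNReal.rpow_le_rpow (poissonWeight_le (hφ₂ q.2)) hr₀.le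
  set Φ : (Fin n → ℤ) × (Fin m → ℤ) → ℕ × ℕ := fun q => (φ₁ q.1, φ₂ q.2)
  have hmass : ∀ p : ℕ × ℕ, ∑' q : Φ ⁻¹' {p}, a q ^ r ≤ M * (μ₁ p.1 * μ₂ p.2) := by
    rintro ⟨i₁, i₂⟩
    refine tsum_le_strongMax_mul_of_dyadic_subset _ (zpow_pos two_pos _) (zpow_pos two_pos _)
      fun q hq => ?_
    obtain ⟨rfl, rfl⟩ := Prod.mk.inj (mem_singleton_iff.1 hq)
    exact prod_mono (hball₁ q.1) (hball₂ q.2)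
  have hsplit : ∀ p : ℕ × ℕ, w₁ p.1 * w₂ p.2 * (μ₁ p.1 * μ₂ p.2) =
      w₁ p.1 * μ₁ p.1 * (w₂ p.2 * μ₂ p.2) := fun p => mul_mul_mul_comm _ _ _ _
  refine (ENNReal.tsum_le_mul_tsum_of_fiberwise Φ (w := fun p => w₁ p.1 * w₂ p.2)
    (μ := fun p => μ₁ p.1 * μ₂ p.2) hweight hmass).trans_eq ?_
  rw [tsum_congr hsplit, ENNReal.tsum_prod_mul (fun i => w₁ i * μ₁ i) (fun i => w₂ i * μ₂ i)]
  exact congr_arg _ (congr_arg₂ (· * ·) (tsum_twoPow_mul_volume_ball n r J₁ ℓ₁ u)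
    (tsum_twoPow_mul_volume_ball m r J₂ ℓ₂ v))

theorem tsum_poissonWeight_le_strongMax {n m : ℕ} {r : ℝ} (hr₀ : 0 < r) (hr₁ : r ≤ 1)
    {ℓ₁ J₁ ℓ₂ J₂ : ℤ} (hℓ₁ : ℓ₁ ≤ J₁) (hℓ₂ : ℓ₂ ≤ J₂)
    (a : (Fin n → ℤ) × (Fin m → ℤ) → ℝ≥0∞)
    {xI : (Fin n → ℤ) → EuclideanSpace ℝ (Fin n)} {yJ : (Fin m → ℤ) → EuclideanSpace ℝ (Fin m)}
    (hxI : ∀ κ, xI κ ∈ dyadicCube n ℓ₁ κ) (hyJ : ∀ κ, yJ κ ∈ dyadicCube m ℓ₂ κ)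
    (u : EuclideanSpace ℝ (Fin n)) (v : EuclideanSpace ℝ (Fin m)) :
    ∑' q, poissonWeight n J₁ ℓ₁ ‖u - xI q.1‖ * poissonWeight m J₂ ℓ₂ ‖v - yJ q.2‖ * a q ≤
      (annulusConst n r * annulusConst m r) ^ (1 / r) *
        twoPow ((n * ((J₁ - ℓ₁ : ℤ) : ℝ) + m * ((J₂ - ℓ₂ : ℤ) : ℝ)) * (1 / r - 1)) *
        strongMax n m (fun x => ∑' q, a q ^ r *
          (dyadicCube n ℓ₁ q.1 ×ˢ dyadicCube m ℓ₂ q.2).indicator 1 x) (u, v) ^ (1 / r) := by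
  refine (ENNReal.tsum_le_rpow_tsum_rpow _ hr₀ hr₁).trans <|
    (ENNReal.rpow_le_rpow (tsum_rpow_poissonWeight_le hr₀ hℓ₁ hℓ₂ a hxI hyJ u v)
      (by positivity)).trans_eq ?_
  rw [show ∀ M A₁ A₂ T₁ T₂ : ℝ≥0∞, M * (A₁ * T₁ * (A₂ * T₂)) = A₁ * A₂ * (T₁ * T₂) * M from
      fun _ _ _ _ _ => by ring,
    ENNReal.mul_rpow_of_nonneg _ _ (by positivity), ENNReal.mul_rpow_of_nonneg _ _ (by positivity),
    ← twoPow_add, twoPow_rpow]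
  congr 3
  push_cast
  field_simp

end

theorem discrete_majorization_flag_general (n m : ℕ)
    (r : ℝ) (hr1 : max ((2 * n : ℝ) / (2 * n + 1)) ((2 * m : ℝ) / (2 * m + 1)) < r)
    (hr2 : r ≤ 1) :
    ∃ C : ℝ≥0∞, 0 < C ∧ C ≠ ⊤ ∧ ∀ j j' k k' : ℤ,
      ∀ a : (Fin n → ℤ) × (Fin m → ℤ) → ℝ≥0∞,
      ∀ xI : (Fin n → ℤ) → EuclideanSpace ℝ (Fin n),
      ∀ yJ : (Fin m → ℤ) → EuclideanSpace ℝ (Fin m),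
        (∀ κ, xI κ ∈ dyadicCube n j' κ) →
        (∀ κ, yJ κ ∈ dyadicCube m (max j' k') κ) →
      ∀ (u : EuclideanSpace ℝ (Fin n)) (v : EuclideanSpace ℝ (Fin m)),
        (∑' q : (Fin n → ℤ) × (Fin m → ℤ),
            ((2 : ℝ≥0∞) ^ (max j j')) ^ ((1 : ℝ) / 2) *
              ((2 : ℝ≥0∞) ^ (max (max j j') (max k k'))) ^ ((1 : ℝ) / 2) *
              ((2 : ℝ≥0∞) ^ (j' * (n : ℤ)) * (2 : ℝ≥0∞) ^ (max j' k' * (m : ℤ))) * a q /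
            (((2 : ℝ≥0∞) ^ (max j j') + ENNReal.ofReal ‖u - xI q.1‖) ^ ((n : ℝ) + 1 / 2) *
              ((2 : ℝ≥0∞) ^ (max (max j j') (max k k')) +
                  ENNReal.ofReal ‖v - yJ q.2‖) ^ ((m : ℝ) + 1 / 2)))
          ≤ C * (2 : ℝ≥0∞) ^
                ((((n : ℝ) * ((max j j' - j' : ℤ) : ℝ) +
                    (m : ℝ) * ((max (max j j') (max k k') - max j' k' : ℤ) : ℝ))) *
                  (1 / r - 1)) *
              (strongMax n m (fun x => ∑' q : (Fin n → ℤ) × (Fin m → ℤ),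
                  (a q) ^ r *
                    (dyadicCube n j' q.1 ×ˢ dyadicCube m (max j' k') q.2).indicator 1 x)
                (u, v)) ^ (1 / r) := by
  have hrn := (le_max_left _ _).trans_lt hr1
  have hrm := (le_max_right _ _).trans_lt hr1
  have hr0 : 0 < r := (by positivity : (0 : ℝ) ≤ 2 * n / (2 * n + 1)).trans_lt hrn
  have hC := ENNReal.mul_ne_top (annulusConst_ne_top hrn) (annulusConst_ne_top hrm)
  refine ⟨(annulusConst n r * annulusConst m r) ^ (1 / r),
    ENNReal.rpow_pos (ENNReal.mul_pos (annulusConst_pos n r).ne' (annulusConst_pos m r).ne') hC,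
    ENNReal.rpow_ne_top_of_nonneg (by positivity) hC, ?_⟩
  intro j j' k k' a xI yJ hxI hyJ u v
  simp_rw [div_eq_poissonWeight_mul_poissonWeight]
  exact tsum_poissonWeight_le_strongMax hr0 hr2 (le_max_right j j')
    (max_le_max (le_max_right j j') (le_max_right k k')) a hxI hyJ u v

/-- Lemma 3.3 (flag-structure discrete majorization): for
`max(2n/(2n+1), 2m/(2m+1)) < r ≤ 1`, with `s = 2^{j∨j'}` and `t = 2^{(j∨j')∨(k∨k')}`,
the sum over dyadic rectangles `I' × J'` (with `ℓ(I') = 2^{j'}`, `ℓ(J') = 2^{j'∨k'}`) of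
sampled coefficients against half-power Poisson profiles is dominated by the `r`-strong
maximal function with loss `2^{[n(j∨j'−j') + m((j∨j')∨(k∨k')−(j'∨k'))](1/r−1)}`. -/
theorem discrete_majorization_flag (n m : ℕ) (hn : 1 ≤ n) (hm : 1 ≤ m)
    (r : ℝ) (hr1 : max ((2 * n : ℝ) / (2 * n + 1)) ((2 * m : ℝ) / (2 * m + 1)) < r)
    (hr2 : r ≤ 1) :
    ∃ C : ℝ≥0∞, 0 < C ∧ C ≠ ⊤ ∧ ∀ j j' k k' : ℤ,
      ∀ a : (Fin n → ℤ) × (Fin m → ℤ) → ℝ≥0∞,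
      ∀ xI : (Fin n → ℤ) → EuclideanSpace ℝ (Fin n),
      ∀ yJ : (Fin m → ℤ) → EuclideanSpace ℝ (Fin m),
        (∀ κ, xI κ ∈ dyadicCube n j' κ) →
        (∀ κ, yJ κ ∈ dyadicCube m (max j' k') κ) →
      ∀ (u : EuclideanSpace ℝ (Fin n)) (v : EuclideanSpace ℝ (Fin m)),
        (∑' q : (Fin n → ℤ) × (Fin m → ℤ),
            ((2 : ℝ≥0∞) ^ (max j j')) ^ ((1 : ℝ) / 2) *
              ((2 : ℝ≥0∞) ^ (max (max j j') (max k k'))) ^ ((1 : ℝ) / 2) *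
              ((2 : ℝ≥0∞) ^ (j' * (n : ℤ)) * (2 : ℝ≥0∞) ^ (max j' k' * (m : ℤ))) * a q /
            (((2 : ℝ≥0∞) ^ (max j j') + ENNReal.ofReal ‖u - xI q.1‖) ^ ((n : ℝ) + 1 / 2) *
              ((2 : ℝ≥0∞) ^ (max (max j j') (max k k')) +
                  ENNReal.ofReal ‖v - yJ q.2‖) ^ ((m : ℝ) + 1 / 2)))
          ≤ C * (2 : ℝ≥0∞) ^
                ((((n : ℝ) * ((max j j' - j' : ℤ) : ℝ) +
                    (m : ℝ) * ((max (max j j') (max k k') - max j' k' : ℤ) : ℝ))) *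
                  (1 / r - 1)) *
              (strongMax n m (fun x => ∑' q : (Fin n → ℤ) × (Fin m → ℤ),
                  (a q) ^ r *
                    (dyadicCube n j' q.1 ×ˢ dyadicCube m (max j' k') q.2).indicator 1 x)
                (u, v)) ^ (1 / r) :=
  discrete_majorization_flag_general n m r hr1 hr2
end

section
/- Let s, t > 0 and m ≥ 1. Then ∫_{ℝ^m} s (s + |y − z|)^{-(m+1)} · t (t + |z|)^{-(m+1)} dz ≤ C · max(s,t) (max(s,t) + |y|)^{-(m+1)} for all y ∈ ℝ^m, with C depending only on m. -/
open MeasureTheory Real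

noncomputable section

namespace PoissonAux

lemma integrable_base (m : ℕ) :
    Integrable (fun z : EuclideanSpace ℝ (Fin m) => (1 + ‖z‖) ^ (-((m : ℝ) + 1))) := by
  apply integrable_one_add_norm
  rw [finrank_euclideanSpace_fin]
  linarith

lemma key_id (m : ℕ) {s : ℝ} (hs : 0 < s) (u : EuclideanSpace ℝ (Fin m)) :
    s * (s + ‖s • u‖) ^ (-((m : ℝ) + 1))
      = s ^ (-(m : ℝ)) * (1 + ‖u‖) ^ (-((m : ℝ) + 1)) := by
  have h1 : ‖s • u‖ = s * ‖u‖ := by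
    rw [norm_smul, Real.norm_eq_abs, abs_of_pos hs]
  have h2 : s + s * ‖u‖ = s * (1 + ‖u‖) := by ring
  rw [h1, h2, Real.mul_rpow hs.le (by positivity), ← mul_assoc]
  congr 1
  nth_rewrite 1 [← Real.rpow_one s]
  rw [← Real.rpow_add hs]
  congr 1
  ring

lemma kernel_integrable (m : ℕ) {s : ℝ} (hs : 0 < s) :
    Integrable (fun z : EuclideanSpace ℝ (Fin m) => s * (s + ‖z‖) ^ (-((m : ℝ) + 1))) := by
  rw [← integrable_comp_smul_iff (volume : Measure (EuclideanSpace ℝ (Fin m)))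
    (fun z => s * (s + ‖z‖) ^ (-((m : ℝ) + 1))) hs.ne']
  simpa only [key_id m hs] using (integrable_base m).const_mul (s ^ (-(m : ℝ)))

lemma kernel_integral (m : ℕ) {s : ℝ} (hs : 0 < s) :
    (∫ z : EuclideanSpace ℝ (Fin m), s * (s + ‖z‖) ^ (-((m : ℝ) + 1)))
      = ∫ z : EuclideanSpace ℝ (Fin m), (1 + ‖z‖) ^ (-((m : ℝ) + 1)) := by
  have h := Measure.integral_comp_smul (volume : Measure (EuclideanSpace ℝ (Fin m)))
    (fun z => s * (s + ‖z‖) ^ (-((m : ℝ) + 1))) s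
  simp only [key_id m hs, integral_const_mul, finrank_euclideanSpace_fin, smul_eq_mul] at h
  have habs : |((s : ℝ) ^ m)⁻¹| = s ^ (-(m : ℝ)) := by
    rw [abs_of_pos (by positivity), ← Real.rpow_natCast s m, ← Real.rpow_neg hs.le]
  rw [habs] at h
  rw [integral_const_mul]
  exact (mul_left_cancel₀ (ne_of_gt (Real.rpow_pos_of_pos hs (-(m:ℝ)))) h).symm

lemma small_factor_bound (m : ℕ) {r M A a : ℝ} (hr : 0 < r) (hrM : r ≤ M)
    (hA : 0 < A) (ha : A / 2 ≤ a) :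
    r * a ^ (-((m : ℝ) + 1)) ≤ 2 ^ ((m : ℝ) + 1) * M * A ^ (-((m : ℝ) + 1)) := by
  have hhalf : (0 : ℝ) < A / 2 := by linarith
  have h1 : a ^ (-((m : ℝ) + 1)) ≤ (A / 2) ^ (-((m : ℝ) + 1)) :=
    Real.rpow_le_rpow_of_nonpos hhalf ha (neg_nonpos.mpr (by positivity))
  have h2 : (A / 2) ^ (-((m : ℝ) + 1)) = 2 ^ ((m : ℝ) + 1) * A ^ (-((m : ℝ) + 1)) := by
    rw [Real.div_rpow hA.le (by norm_num), Real.rpow_neg (by norm_num : (0:ℝ) ≤ 2),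
      div_eq_mul_inv, inv_inv, mul_comm]
  calc r * a ^ (-((m : ℝ) + 1)) ≤ M * ((A / 2) ^ (-((m : ℝ) + 1))) := by
        apply mul_le_mul hrM h1 (Real.rpow_nonneg (by linarith) _) (by linarith)
    _ = 2 ^ ((m : ℝ) + 1) * M * A ^ (-((m : ℝ) + 1)) := by rw [h2]; ring

end PoissonAux

open PoissonAux

/-- Convolution stability of Poisson-type profiles: for `s, t > 0`,
`∫_{ℝ^m} s (s+|y−z|)^{-(m+1)} t (t+|z|)^{-(m+1)} dz
  ≤ C max(s,t) (max(s,t)+|y|)^{-(m+1)}` with `C = C(m)`. -/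
theorem poisson_convolution_stability (m : ℕ) (hm : 1 ≤ m) :
    ∃ C > 0, ∀ s t : ℝ, 0 < s → 0 < t → ∀ y : EuclideanSpace ℝ (Fin m),
      (∫ z : EuclideanSpace ℝ (Fin m),
          s * (s + ‖y - z‖) ^ (-((m : ℝ) + 1)) * (t * (t + ‖z‖) ^ (-((m : ℝ) + 1))))
        ≤ C * max s t * (max s t + ‖y‖) ^ (-((m : ℝ) + 1)) := by
  set p : ℝ := (m : ℝ) + 1 with hp
  set c : ℝ := ∫ z : EuclideanSpace ℝ (Fin m), (1 + ‖z‖) ^ (-p) with hc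
  have hcpos : 0 < c := by
    rw [hc]
    rw [integral_pos_iff_support_of_nonneg (fun z => by positivity) (integrable_base m)]
    have : (Function.support fun z : EuclideanSpace ℝ (Fin m) => (1 + ‖z‖) ^ (-p))
        = Set.univ := by
      ext z
      simp only [Function.mem_support, Set.mem_univ, iff_true]
      positivity
    rw [this]
    simpa using (isOpen_univ.measure_pos (volume : Measure (EuclideanSpace ℝ (Fin m)))
      Set.univ_nonempty)
  refine ⟨2 ^ p * (2 * c), by positivity, fun s t hs ht y => ?_⟩
  set M : ℝ := max s t with hM
  have hMpos : 0 < M := lt_max_of_lt_left hs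
  have hApos : 0 < M + ‖y‖ := by positivity
  set K : ℝ := 2 ^ p * M * (M + ‖y‖) ^ (-p) with hK
  have hKpos : 0 < K := by positivity
  set sf : EuclideanSpace ℝ (Fin m) → ℝ := fun z => s * (s + ‖y - z‖) ^ (-p) with hsf
  set tf : EuclideanSpace ℝ (Fin m) → ℝ := fun z => t * (t + ‖z‖) ^ (-p) with htf
  have hsf_nonneg : ∀ z, 0 ≤ sf z := fun z => by
    simp only [hsf]; positivity
  have htf_nonneg : ∀ z, 0 ≤ tf z := fun z => by
    simp only [htf]; positivity
  -- pointwise bound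
  have hptwise : ∀ z, sf z * tf z ≤ K * (tf z + sf z) := by
    intro z
    have hy : ‖y‖ ≤ ‖y - z‖ + ‖z‖ := by
      calc ‖y‖ = ‖(y - z) + z‖ := by rw [sub_add_cancel]
        _ ≤ ‖y - z‖ + ‖z‖ := norm_add_le _ _
    have hsum : M + ‖y‖ ≤ (s + ‖y - z‖) + (t + ‖z‖) := by
      have : M ≤ s + t := max_le (by linarith) (by linarith)
      linarith
    rcases le_total (s + ‖y - z‖) (t + ‖z‖) with h | h
    · -- t + ‖z‖ is large
      have hbig : (M + ‖y‖) / 2 ≤ t + ‖z‖ := by linarith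
      have : tf z ≤ K := by
        simpa [htf, hK, hp] using
          small_factor_bound m ht (le_max_right s t) hApos hbig
      calc sf z * tf z ≤ sf z * K := by
            exact mul_le_mul_of_nonneg_left this (hsf_nonneg z)
        _ ≤ K * (tf z + sf z) := by
            nlinarith [hsf_nonneg z, htf_nonneg z, hKpos.le]
    · -- s + ‖y - z‖ is large
      have hbig : (M + ‖y‖) / 2 ≤ s + ‖y - z‖ := by linarith
      have : sf z ≤ K := by
        simpa [hsf, hK, hp] using
          small_factor_bound m hs (le_max_left s t) hApos hbig
      calc sf z * tf z ≤ K * tf z := by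
            exact mul_le_mul_of_nonneg_right this (htf_nonneg z)
        _ ≤ K * (tf z + sf z) := by
            nlinarith [hsf_nonneg z, htf_nonneg z, hKpos.le]
  -- integrability facts
  have htf_int : Integrable tf := kernel_integrable m ht
  have hsf_int : Integrable sf := by
    have h0 : Integrable (fun w : EuclideanSpace ℝ (Fin m) => s * (s + ‖w‖) ^ (-p)) :=
      kernel_integrable m hs
    exact h0.comp_sub_left y
  have hg_int : Integrable (fun z => K * (tf z + sf z)) := (htf_int.add hsf_int).const_mul K
  have hmono := integral_mono_of_nonneg
    (Filter.Eventually.of_forall (fun z => mul_nonneg (hsf_nonneg z) (htf_nonneg z)))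
    hg_int (Filter.Eventually.of_forall hptwise)
  refine le_trans hmono ?_
  have htf_val : (∫ z, tf z) = c := kernel_integral m ht
  have hsf_val : (∫ z, sf z) = c := by
    rw [hsf]
    rw [show (∫ z : EuclideanSpace ℝ (Fin m), s * (s + ‖y - z‖) ^ (-p))
        = ∫ z : EuclideanSpace ℝ (Fin m), s * (s + ‖z‖) ^ (-p) from
      integral_sub_left_eq_self (fun w => s * (s + ‖w‖) ^ (-p)) volume y]
    exact kernel_integral m hs
  rw [integral_const_mul, integral_add htf_int hsf_int, htf_val, hsf_val, hK]
  apply le_of_eq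
  ring
end
end
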